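/- arXiv:2304.08008 — 11 statements merged into one kernel-verified Lean document; each statement's English description precedes it below -/
import Mathlib

section
/- If the promises profile (r,s) is stable (no blocking coalition exists), then the committee decision is to enact the reform: D(r,s) = R. -/
open Finset

/-- The committee enacts the reform: at least `κ` members vote for it,
where member `i` votes for the reform iff `u i + r i ≥ s i`. -/
def Enacts {I : ℕ} (κ : ℕ) (u r s : Fin I → ℝ) : Prop :=
  κ ≤ (Finset.univ.filter (fun i => s i ≤ u i + r i)).card

/-- Coalition `C` blocks the promises profile `(r, s)`. -/
def Blocks {I : ℕ} (κ : ℕ) (u r s : Fin I → ℝ) (C : Finset (Fin I)) : Prop :=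
  (Enacts κ u r s ∧ ∃ s' : Fin I → ℝ, (∑ i, s' i = 0) ∧ (∀ i, s' i ≠ s i ↔ i ∈ C) ∧
      ¬ Enacts κ u r s' ∧ ∀ i ∈ C, u i + r i < s' i) ∨
  (¬ Enacts κ u r s ∧ ∃ r' : Fin I → ℝ, (∑ i, r' i = 0) ∧ (∀ i, r' i ≠ r i ↔ i ∈ C) ∧
      Enacts κ u r' s ∧ ∀ i ∈ C, s i < u i + r' i)

/-- The profile `(r, s)` is stable: no blocking coalition exists. -/
def StableProfile {I : ℕ} (κ : ℕ) (u r s : Fin I → ℝ) : Prop :=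
  ∀ C : Finset (Fin I), ¬ Blocks κ u r s C

/-!
If the status quo prevailed, the whole committee could block: since the total intensity exceeds
the total of the status-quo promises (which is zero), the surplus `∑ u - ∑ s` can be shared out
equally through balanced reform promises `r' i = s i - u i + ε`, making every member strictly
prefer the reform, which is then enacted unanimously.
-/

theorem exists_sum_eq_zero_forall_lt_add {ι : Type*} [Fintype ι] (u s : ι → ℝ)
    (h : ∑ i, s i < ∑ i, u i) : ∃ r : ι → ℝ, ∑ i, r i = 0 ∧ ∀ i, s i < u i + r i := by
  have hι : Nonempty ι := by
    by_contra hempty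
    rw [not_nonempty_iff] at hempty
    simp at h
  have hcard : (0 : ℝ) < Fintype.card ι := by exact_mod_cast Fintype.card_pos
  set ε := (∑ i, u i - ∑ i, s i) / Fintype.card ι
  have hε : 0 < ε := div_pos (sub_pos.mpr h) hcard
  refine ⟨fun i => s i - u i + ε, ?_, fun i => by linarith⟩
  simp only [sum_add_distrib, sum_sub_distrib, sum_const, card_univ, nsmul_eq_mul, ε]
  field_simp
  ring

theorem enacts_of_forall_le {I κ : ℕ} (hκI : κ ≤ I) {u r s : Fin I → ℝ}
    (h : ∀ i, s i ≤ u i + r i) : Enacts κ u r s := by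
  simpa [Enacts, filter_true_of_mem fun i _ => h i] using hκI

theorem blocks_of_not_enacts {I κ : ℕ} {u r s r' : Fin I → ℝ} (hE : ¬ Enacts κ u r s)
    (hr' : ∑ i, r' i = 0) (hE' : Enacts κ u r' s) (hlt : ∀ i, s i < u i + r' i) :
    Blocks κ u r s (univ.filter fun i => r' i ≠ r i) :=
  Or.inr ⟨hE, r', hr', fun i => by simp, hE', fun i _ => hlt i⟩

theorem stable_implies_reform_general {I : ℕ} (κ : ℕ) (hκI : κ ≤ I)
    (u : Fin I → ℝ) (hu : 0 < ∑ i, u i)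
    (r s : Fin I → ℝ) (hs : ∑ i, s i = 0)
    (hstable : StableProfile κ u r s) :
    Enacts κ u r s := by
  by_contra hE
  obtain ⟨r', hr', hlt⟩ := exists_sum_eq_zero_forall_lt_add u s (hs ▸ hu)
  exact hstable _ <|
    blocks_of_not_enacts hE hr' (enacts_of_forall_le hκI fun i => (hlt i).le) hlt

/-- a stable promises profile leads the committee to enact the reform. -/
theorem stable_implies_reform {I : ℕ} (κ : ℕ) (hκ : 1 ≤ κ) (hκI : κ ≤ I)
    (u : Fin I → ℝ) (hmono : Monotone u) (hu : 0 < ∑ i, u i)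
    (r s : Fin I → ℝ) (hr : ∑ i, r i = 0) (hs : ∑ i, s i = 0)
    (hstable : StableProfile κ u r s) :
    Enacts κ u r s :=
  stable_implies_reform_general κ hκI u hu r s hs hstable
end

section
/- A promises profile (r,s) ∈ P² is stable if and only if (r − s, 0) is stable; hence the set of stable profiles equals {(r' + s, s) : r' ∈ S₀, s ∈ P}. -/
open Finset

lemma enacts_congr {I : ℕ} (κ : ℕ) {u r s r' s' : Fin I → ℝ}
    (h : ∀ i, s' i ≤ u i + r' i ↔ s i ≤ u i + r i) :
    Enacts κ u r' s' ↔ Enacts κ u r s := by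
  unfold Enacts
  have : (Finset.univ.filter fun i => s' i ≤ u i + r' i)
      = Finset.univ.filter fun i => s i ≤ u i + r i :=
    Finset.filter_congr fun i _ => by simpa using h i
  rw [this]

lemma blocks_shift {I : ℕ} (κ : ℕ) (u r s t : Fin I → ℝ) (C : Finset (Fin I))
    (ht : ∑ i, t i = 0) (h : Blocks κ u r s C) : Blocks κ u (r - t) (s - t) C := by
  have hE : Enacts κ u (r - t) (s - t) ↔ Enacts κ u r s :=
    enacts_congr κ fun i => by simp [Pi.sub_apply]; constructor <;> intro <;> linarith
  rcases h with ⟨hE1, s', hsum, hmem, hnE, hlt⟩ | ⟨hE1, r', hsum, hmem, hE2, hlt⟩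
  · left
    refine ⟨hE.mpr hE1, s' - t, ?_, ?_, ?_, ?_⟩
    · simp [Finset.sum_sub_distrib, hsum, ht]
    · intro i
      rw [← hmem i]
      simp only [Pi.sub_apply]
      constructor <;> intro hne heq <;> exact hne (by linarith)
    · intro hc
      exact hnE ((enacts_congr κ (u := u) (r := r) (s := s') (r' := r - t) (s' := s' - t)
        fun i => by simp [Pi.sub_apply]; constructor <;> intro <;> linarith).mp hc)
    · intro i hi
      have := hlt i hi
      simp only [Pi.sub_apply]
      linarith
  · right
    refine ⟨fun hc => hE1 (hE.mp hc), r' - t, ?_, ?_, ?_, ?_⟩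
    · simp [Finset.sum_sub_distrib, hsum, ht]
    · intro i
      rw [← hmem i]
      simp only [Pi.sub_apply]
      constructor <;> intro hne heq <;> exact hne (by linarith)
    · exact (enacts_congr κ (u := u) (r := r') (s := s) (r' := r' - t) (s' := s - t)
        fun i => by simp [Pi.sub_apply]; constructor <;> intro <;> linarith).mpr hE2
    · intro i hi
      have := hlt i hi
      simp only [Pi.sub_apply]
      linarith

lemma blocks_shift_iff {I : ℕ} (κ : ℕ) (u r s : Fin I → ℝ) (C : Finset (Fin I))
    (hs : ∑ i, s i = 0) : Blocks κ u r s C ↔ Blocks κ u (r - s) 0 C := by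
  constructor
  · intro h
    have := blocks_shift κ u r s s C hs h
    have e : s - s = (0 : Fin I → ℝ) := by abel
    rwa [e] at this
  · intro h
    have hns : (∑ i, (-s) i) = 0 := by simp [Finset.sum_neg_distrib, hs]
    have := blocks_shift κ u (r - s) 0 (-s) C hns h
    have e1 : r - s - (-s) = r := by abel
    have e2 : (0 : Fin I → ℝ) - (-s) = s := by abel
    rwa [e1, e2] at this

/-- `(r,s)` is stable iff `(r - s, 0)` is stable, and hence the set of
stable profiles is `{(r' + s, s) : r' ∈ S₀, s ∈ P}`. -/
theorem stable_equivalence_class {I : ℕ} (κ : ℕ) (hκ : 1 ≤ κ) (hκI : κ ≤ I)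
    (u : Fin I → ℝ) (hmono : Monotone u) (hu : 0 < ∑ i, u i) :
    (∀ r s : Fin I → ℝ, (∑ i, r i = 0) → (∑ i, s i = 0) →
      (StableProfile κ u r s ↔ StableProfile κ u (r - s) 0)) ∧
    {p : (Fin I → ℝ) × (Fin I → ℝ) |
        (∑ i, p.1 i = 0) ∧ (∑ i, p.2 i = 0) ∧ StableProfile κ u p.1 p.2}
      = {p : (Fin I → ℝ) × (Fin I → ℝ) | ∃ r' s : Fin I → ℝ,
          (∑ i, r' i = 0) ∧ (∑ i, s i = 0) ∧ StableProfile κ u r' 0 ∧ p = (r' + s, s)} := by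
  have main : ∀ r s : Fin I → ℝ, (∑ i, s i = 0) →
      (StableProfile κ u r s ↔ StableProfile κ u (r - s) 0) := by
    intro r s hs
    have key : ∀ C, Blocks κ u r s C ↔ Blocks κ u (r - s) 0 C := fun C =>
      blocks_shift_iff κ u r s C hs
    exact forall_congr' fun C => not_congr (key C)
  refine ⟨fun r s _ hs => main r s hs, ?_⟩
  ext p
  simp only [Set.mem_setOf_eq]
  constructor
  · rintro ⟨h1, h2, h3⟩
    refine ⟨p.1 - p.2, p.2, ?_, h2, (main p.1 p.2 h2).mp h3, ?_⟩
    · simp [Finset.sum_sub_distrib, h1, h2]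
    · have : p.1 - p.2 + p.2 = p.1 := by abel
      rw [this]
  · rintro ⟨r', s, hr', hsn, hst, rfl⟩
    have hsum : (∑ i, (r' + s) i) = 0 := by
      simp [Finset.sum_add_distrib, hr', hsn]
    refine ⟨hsum, hsn, (main (r' + s) s hsn).mpr ?_⟩
    have : r' + s - s = r' := by abel
    rw [this]
    exact hst
end

section
/- For any r ∈ E with r ≠ 0, there is no pair of members (i,j) with r_i < 0 < r_j and u_i + r_i < u_j + r_j. -/
open Finset

/-- `r ∈ S₀`: `r` is zero-sum and `∑_{i∈C}(u_i + r_i) ≥ 0` for every coalition `C`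
with `|C| ≥ ĸ̂ = I - κ + 1` (characterization of stable promises contingent on the reform). -/
def inS0 {I : ℕ} (κ : ℕ) (u r : Fin I → ℝ) : Prop :=
  (∑ i, r i = 0) ∧
  ∀ C : Finset (Fin I), I - κ + 1 ≤ C.card → 0 ≤ ∑ i ∈ C, (u i + r i)

/-- Total promises transfer `T(r) = (1/2) ∑_i |r_i|`. -/
noncomputable def totT {I : ℕ} (r : Fin I → ℝ) : ℝ := (∑ i, |r i|) / 2

/-- `r ∈ E`: `r` is stable and minimizes the total transfer over `S₀`. -/
def inE {I : ℕ} (κ : ℕ) (u r : Fin I → ℝ) : Prop :=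
  inS0 κ u r ∧ ∀ r' : Fin I → ℝ, inS0 κ u r' → totT r ≤ totT r'

lemma sum_diff_two {I : ℕ} {i j : Fin I} (hij : i ≠ j) (f g : Fin I → ℝ)
    (h : ∀ k, k ≠ i → k ≠ j → f k = g k) (C : Finset (Fin I)) :
    ∑ k ∈ C, f k = ∑ k ∈ C, g k + (if i ∈ C then f i - g i else 0)
      + (if j ∈ C then f j - g j else 0) := by
  have key : ∀ k ∈ C, f k = g k + ((if k = i then f i - g i else 0)
      + (if k = j then f j - g j else 0)) := by
    intro k _
    by_cases h1 : k = i
    · subst h1; simp [hij]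
    · by_cases h2 : k = j
      · subst h2; simp [h1]
      · simp [h1, h2, h k h1 h2]
  rw [Finset.sum_congr rfl key, Finset.sum_add_distrib, Finset.sum_add_distrib,
      Finset.sum_ite_eq' C i, Finset.sum_ite_eq' C j]
  ring

/-- in a nonzero equilibrium there is no pair `(i,j)` with
`r_i < 0 < r_j` and `u_i + r_i < u_j + r_j`. -/
theorem no_switched_pair {I : ℕ} (κ : ℕ) (hκ : 1 ≤ κ) (hκI : κ ≤ I)
    (u : Fin I → ℝ) (hmono : Monotone u) (hu : 0 < ∑ i, u i)
    (r : Fin I → ℝ) (hr : inE κ u r) (hrne : r ≠ 0) :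
    ¬ ∃ i j : Fin I, r i < 0 ∧ 0 < r j ∧ u i + r i < u j + r j := by
  rintro ⟨i, j, hri, hrj, huij⟩
  have hij : i ≠ j := by rintro rfl; linarith
  set ε := min (min (-r i) (r j)) ((u j + r j) - (u i + r i)) with hεdef
  have hε0 : 0 < ε := lt_min (lt_min (by linarith) hrj) (by linarith)
  have hεi : ε ≤ -r i := le_trans (min_le_left _ _) (min_le_left _ _)
  have hεj : ε ≤ r j := le_trans (min_le_left _ _) (min_le_right _ _)
  have hεd : ε ≤ (u j + r j) - (u i + r i) := min_le_right _ _
  set r' : Fin I → ℝ := fun k => if k = i then r i + ε else if k = j then r j - ε else r k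
    with hr'def
  have hr'i : r' i = r i + ε := by simp [hr'def]
  have hr'j : r' j = r j - ε := by simp [hr'def, hij.symm]
  have hr'k : ∀ k, k ≠ i → k ≠ j → r' k = r k := by
    intro k h1 h2; simp [hr'def, h1, h2]
  have hS0' : inS0 κ u r' := by
    constructor
    · have h := sum_diff_two hij r' r hr'k Finset.univ
      rw [h, hr'i, hr'j]
      simp only [Finset.mem_univ, if_true]
      rw [hr.1.1]; ring
    · intro C hC
      have h := sum_diff_two hij (fun k => u k + r' k) (fun k => u k + r k)
        (fun k h1 h2 => by simp [hr'k k h1 h2]) C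
      rw [h, hr'i, hr'j]
      have hbase := hr.1.2 C hC
      by_cases hiC : i ∈ C
      · by_cases hjC : j ∈ C
        · simp only [hiC, hjC, if_true]; linarith
        · simp only [hiC, hjC, if_true, if_false]; linarith
      · by_cases hjC : j ∈ C
        · simp only [hiC, hjC, if_true, if_false]
          -- need ∑_C (u+r) ≥ ε; swap j for i
          have hiE : i ∉ C.erase j := fun h => hiC (Finset.mem_of_mem_erase h)
          have hcard : (insert i (C.erase j)).card = C.card := by
            rw [Finset.card_insert_of_notMem hiE, Finset.card_erase_of_mem hjC]
            have : 1 ≤ C.card := Finset.card_pos.mpr ⟨j, hjC⟩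
            omega
          have h2 := hr.1.2 (insert i (C.erase j)) (by rw [hcard]; exact hC)
          rw [Finset.sum_insert hiE] at h2
          have h3 : ∑ k ∈ C.erase j, (u k + r k) + (u j + r j) = ∑ k ∈ C, (u k + r k) :=
            Finset.sum_erase_add C _ hjC
          linarith
        · simp only [hiC, hjC, if_false]; linarith
  have hT : totT r' = totT r - ε := by
    have h := sum_diff_two hij (fun k => |r' k|) (fun k => |r k|)
      (fun k h1 h2 => by simp [hr'k k h1 h2]) Finset.univ
    have h1 : |r' i| = |r i| - ε := by
      rw [hr'i, abs_of_nonpos (by linarith), abs_of_nonpos (by linarith)]; ring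
    have h2 : |r' j| = |r j| - ε := by
      have a1 : (0:ℝ) ≤ r j - ε := by linarith
      have a2 : (0:ℝ) ≤ r j := by linarith
      rw [hr'j]
      rw [abs_of_nonneg a1]
      rw [abs_of_nonneg a2]
    unfold totT
    rw [h, h1, h2]
    simp only [Finset.mem_univ, if_true]
    ring
  have := hr.2 r' hS0'
  rw [hT] at this
  linarith
end

section
/- For any r ∈ E with r ≠ 0, there is no member i with r_i < 0 and u_i + r_i < 0; i.e., every net promiser satisfies the individual rationality constraint r_i ≥ −u_i. -/
open Finset

/-- in a nonzero equilibrium, no member `i` has `r_i < 0` and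
`u_i + r_i < 0`; i.e. every net promiser satisfies `r_i ≥ -u_i`. -/
theorem promiser_individual_rationality {I : ℕ} (κ : ℕ) (hκ : 1 ≤ κ) (hκI : κ ≤ I)
    (u : Fin I → ℝ) (hmono : Monotone u) (hu : 0 < ∑ i, u i)
    (r : Fin I → ℝ) (hr : inE κ u r) (hrne : r ≠ 0) :
    (¬ ∃ i : Fin I, r i < 0 ∧ u i + r i < 0) ∧ ∀ i : Fin I, r i < 0 → -u i ≤ r i := by
  have hmain : ¬ ∃ i : Fin I, r i < 0 ∧ u i + r i < 0 := by
    rintro ⟨i, hri, hui⟩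
    have hj : ∃ j, 0 < r j := by
      by_contra h
      push_neg at h
      have h0 := (Finset.sum_eq_zero_iff_of_nonpos (fun k _ => h k)).mp hr.1.1
      have := h0 i (Finset.mem_univ i)
      linarith
    obtain ⟨j, hrj⟩ := hj
    have hij : i ≠ j := by rintro rfl; linarith
    set ε := min (min (-r i) (r j)) (-(u i + r i)) with hεdef
    have hε0 : 0 < ε := by
      simp only [hεdef, lt_min_iff]
      exact ⟨⟨by linarith, hrj⟩, by linarith⟩
    have hε1 : ε ≤ -r i := le_trans (min_le_left _ _) (min_le_left _ _)
    have hε2 : ε ≤ r j := le_trans (min_le_left _ _) (min_le_right _ _)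
    have hε3 : ε ≤ -(u i + r i) := min_le_right _ _
    set r' : Fin I → ℝ :=
      fun k => r k + (if k = i then ε else 0) - (if k = j then ε else 0) with hr'def
    have hptsum : ∀ k, u k + r' k =
        (u k + r k) + ((if k = i then ε else 0) - (if k = j then ε else 0)) := by
      intro k; simp only [hr'def]; ring
    have key : ∀ C : Finset (Fin I), i ∈ C → I - κ + 1 ≤ C.card →
        0 ≤ ∑ k ∈ C, (u k + r' k) := by
      intro C hiC hcard
      have h0 := hr.1.2 C hcard
      have hsum : ∑ k ∈ C, (u k + r' k)
          = ∑ k ∈ C, (u k + r k) + (ε - (if j ∈ C then ε else 0)) := by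
        rw [Finset.sum_congr rfl (fun k _ => hptsum k), Finset.sum_add_distrib,
          Finset.sum_sub_distrib, Finset.sum_ite_eq', Finset.sum_ite_eq', if_pos hiC]
      rw [hsum]
      split_ifs with h
      · linarith
      · linarith
    have hr'i : r' i = r i + ε := by simp [hr'def, hij]
    have hS0' : inS0 κ u r' := by
      constructor
      · have : ∑ k, r' k = ∑ k, r k + (ε - ε) := by
          rw [show (fun k => r' k) = fun k =>
              r k + ((if k = i then ε else 0) - (if k = j then ε else 0)) from
            funext fun k => by simp only [hr'def]; ring]
          rw [Finset.sum_add_distrib, Finset.sum_sub_distrib, Finset.sum_ite_eq',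
            Finset.sum_ite_eq', if_pos (Finset.mem_univ i), if_pos (Finset.mem_univ j)]
        rw [this, hr.1.1]; ring
      · intro C hcard
        by_cases hiC : i ∈ C
        · exact key C hiC hcard
        · have hins : 0 ≤ ∑ k ∈ insert i C, (u k + r' k) := by
            apply key _ (Finset.mem_insert_self i C)
            rw [Finset.card_insert_of_notMem hiC]; omega
          rw [Finset.sum_insert hiC] at hins
          have hle : u i + r' i ≤ 0 := by rw [hr'i]; linarith
          linarith
    have habs : ∀ k, |r' k| = |r k| - (if k = i then ε else 0) - (if k = j then ε else 0) := by
      intro k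
      rcases eq_or_ne k i with rfl | hki
      · rw [if_pos rfl, if_neg hij, hr'i, abs_of_nonpos (by linarith),
          abs_of_nonpos (le_of_lt hri)]
        ring
      · rcases eq_or_ne k j with rfl | hkj
        · have : r' k = r k - ε := by simp [hr'def, hki]
          rw [if_neg hki, if_pos rfl, this, abs_of_nonneg (by linarith), abs_of_pos hrj]
          ring
        · have : r' k = r k := by simp [hr'def, hki, hkj]
          rw [if_neg hki, if_neg hkj, this]; ring
    have hT : totT r' = totT r - ε := by
      unfold totT
      rw [Finset.sum_congr rfl (fun k _ => habs k), Finset.sum_sub_distrib,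
        Finset.sum_sub_distrib, Finset.sum_ite_eq', Finset.sum_ite_eq',
        if_pos (Finset.mem_univ i), if_pos (Finset.mem_univ j)]
      ring
    have hmin := hr.2 r' hS0'
    rw [hT] at hmin
    linarith
  refine ⟨hmain, ?_⟩
  intro i hi
  by_contra h'
  push_neg at h'
  exact hmain ⟨i, hi, by linarith⟩
end

section
/- For any nonzero equilibrium r ∈ E, setting k̲ = max{i : r_i > 0} and k̄ = min{i : r_i < 0}, one has k̲ < k̄, r_k = 0 for k̲ < k < k̄, u_{k̄} > 0, r_i ≥ 0 for all i ≤ k̲, −u_j ≤ r_j ≤ 0 for all j ≥ k̄, and u_i + r_i ≤ u_j + r_j for all i ≤ k̲ and j ≥ k̄. -/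
open Finset

lemma perturb_lemma {I κ : ℕ} {u r : Fin I → ℝ} (hr : inE κ u r)
    {i j : Fin I} (hij : i ≠ j) {ε : ℝ} (hε0 : 0 < ε) (hεi : ε ≤ r i) (hεj : ε ≤ -r j)
    (hslack : ∀ C : Finset (Fin I), I - κ + 1 ≤ C.card → i ∈ C → j ∉ C →
      ε ≤ ∑ k ∈ C, (u k + r k)) : False := by
  set r' : Fin I → ℝ := fun k => r k + (if k = j then ε else 0) + (if k = i then -ε else 0)
    with hr'def
  have hsum : ∀ (s : Finset (Fin I)) (f : Fin I → ℝ),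
      ∑ k ∈ s, (f k + r' k) =
        (∑ k ∈ s, (f k + r k)) + ((if j ∈ s then ε else 0) + (if i ∈ s then -ε else 0)) := by
    intro s f
    have hpt : ∀ k ∈ s, f k + r' k
        = (f k + r k) + ((if k = j then ε else 0) + (if k = i then -ε else 0)) := by
      intro k _; simp only [hr'def]; ring
    rw [Finset.sum_congr rfl hpt, Finset.sum_add_distrib, Finset.sum_add_distrib,
      Finset.sum_add_distrib,
      Finset.sum_ite_eq' s j (fun _ => ε), Finset.sum_ite_eq' s i (fun _ => -ε)]
  have hS : inS0 κ u r' := by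
    constructor
    · have h := hsum Finset.univ (fun _ => 0)
      simp only [zero_add, Finset.mem_univ, if_true] at h
      rw [h, hr.1.1]; ring
    · intro C hC
      rw [hsum C u]
      have hbase := hr.1.2 C hC
      by_cases hiC : i ∈ C
      · by_cases hjC : j ∈ C
        · simp only [hiC, hjC, if_true]; linarith
        · have hsl := hslack C hC hiC hjC
          simp only [hiC, hjC, if_true, if_false]; linarith
      · by_cases hjC : j ∈ C <;> simp only [hiC, hjC, if_true, if_false] <;> linarith
  have habs : ∀ k ∈ (Finset.univ : Finset (Fin I)),
      |r' k| = |r k| + ((if k = j then -ε else 0) + (if k = i then -ε else 0)) := by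
    intro k _
    by_cases hkj : k = j
    · subst hkj
      have hki : ¬ k = i := fun h => hij h.symm
      simp only [hr'def, hki, eq_self_iff_true, if_true, if_false, add_zero]
      rw [abs_of_nonpos (by linarith), abs_of_nonpos (by linarith)]
      ring
    · by_cases hki : k = i
      · subst hki
        simp only [hr'def, hkj, eq_self_iff_true, if_true, if_false, add_zero, zero_add]
        rw [abs_of_nonneg (by linarith), abs_of_nonneg (by linarith)]
      · simp [hr'def, hkj, hki]
  have hT : totT r' < totT r := by
    unfold totT
    rw [Finset.sum_congr rfl habs, Finset.sum_add_distrib, Finset.sum_add_distrib,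
      Finset.sum_ite_eq' Finset.univ j (fun _ => -ε), Finset.sum_ite_eq' Finset.univ i (fun _ => -ε)]
    simp only [Finset.mem_univ, if_true]
    linarith
  exact absurd (hr.2 r' hS) (not_le.2 hT)

lemma swap_ineq {I κ : ℕ} {u r : Fin I → ℝ} (hr : inE κ u r)
    {i j : Fin I} (hi : 0 < r i) (hj : r j < 0) : u i + r i ≤ u j + r j := by
  by_contra hcon
  push_neg at hcon
  have hij : i ≠ j := fun h => by rw [h] at hi; linarith
  have hε0 : 0 < min ((u i + r i) - (u j + r j)) (min (r i) (-r j)) :=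
    lt_min (by linarith) (lt_min hi (by linarith))
  refine perturb_lemma hr hij hε0
    (le_trans (min_le_right _ _) (min_le_left _ _))
    (le_trans (min_le_right _ _) (min_le_right _ _)) ?_
  intro C hC hiC hjC
  have hjE : j ∉ C.erase i := fun h => hjC (Finset.mem_of_mem_erase h)
  have hcard : (insert j (C.erase i)).card = C.card := by
    rw [Finset.card_insert_of_notMem hjE, Finset.card_erase_of_mem hiC]
    have : 1 ≤ C.card := Finset.card_pos.2 ⟨i, hiC⟩
    omega
  have hC' := hr.1.2 (insert j (C.erase i)) (by rw [hcard]; exact hC)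
  rw [Finset.sum_insert hjE] at hC'
  have herase : ∑ k ∈ C.erase i, (u k + r k) = (∑ k ∈ C, (u k + r k)) - (u i + r i) := by
    rw [← Finset.sum_erase_add C _ hiC]; ring
  rw [herase] at hC'
  have hεδ : min ((u i + r i) - (u j + r j)) (min (r i) (-r j)) ≤ (u i + r i) - (u j + r j) :=
    min_le_left _ _
  linarith

lemma lower_bound {I κ : ℕ} {u r : Fin I → ℝ} (hr : inE κ u r)
    {i j : Fin I} (hi : 0 < r i) (hj : r j < 0) : 0 ≤ u j + r j := by
  by_contra hcon
  push_neg at hcon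
  have hij : i ≠ j := fun h => by rw [h] at hi; linarith
  have hε0 : 0 < min (-(u j + r j)) (min (r i) (-r j)) :=
    lt_min (by linarith) (lt_min hi (by linarith))
  refine perturb_lemma hr hij hε0
    (le_trans (min_le_right _ _) (min_le_left _ _))
    (le_trans (min_le_right _ _) (min_le_right _ _)) ?_
  intro C hC hiC hjC
  have hcard : I - κ + 1 ≤ (insert j C).card :=
    le_trans hC (Finset.card_le_card (Finset.subset_insert _ _))
  have hC' := hr.1.2 (insert j C) hcard
  rw [Finset.sum_insert hjC] at hC'
  have hεδ : min (-(u j + r j)) (min (r i) (-r j)) ≤ -(u j + r j) := min_le_left _ _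
  linarith

/-- structure of nonzero equilibria via `k̲ = max{i : r_i > 0}` and
`k̄ = min{i : r_i < 0}`. -/
theorem equilibrium_structure {I : ℕ} (κ : ℕ) (hκ : 1 ≤ κ) (hκI : κ ≤ I)
    (u : Fin I → ℝ) (hmono : Monotone u) (hu : 0 < ∑ i, u i)
    (r : Fin I → ℝ) (hr : inE κ u r) (hrne : r ≠ 0)
    (kl kb : Fin I)
    (hkl : 0 < r kl) (hklmax : ∀ i : Fin I, 0 < r i → i ≤ kl)
    (hkb : r kb < 0) (hkbmin : ∀ i : Fin I, r i < 0 → kb ≤ i) :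
    kl < kb ∧
    (∀ k : Fin I, kl < k → k < kb → r k = 0) ∧
    0 < u kb ∧
    (∀ i : Fin I, i ≤ kl → 0 ≤ r i) ∧
    (∀ j : Fin I, kb ≤ j → -u j ≤ r j ∧ r j ≤ 0) ∧
    (∀ i j : Fin I, i ≤ kl → kb ≤ j → u i + r i ≤ u j + r j) := by
  have hswap := swap_ineq hr hkl hkb
  have hlb := lower_bound hr hkl hkb
  have hklb : kl < kb := by
    by_contra h
    push_neg at h
    have := hmono h
    linarith
  refine ⟨hklb, ?_, ?_, ?_, ?_, ?_⟩
  · intro k h1 h2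
    rcases lt_trichotomy (r k) 0 with h | h | h
    · exact absurd (hkbmin k h) (not_le.2 h2)
    · exact h
    · exact absurd (hklmax k h) (not_le.2 h1)
  · linarith
  · intro i hi
    by_contra h
    push_neg at h
    exact absurd (le_trans (hkbmin i h) hi) (not_le.2 hklb)
  · intro j hj
    have hj0 : r j ≤ 0 := by
      by_contra h
      push_neg at h
      exact absurd (le_trans hj (hklmax j h)) (not_le.2 hklb)
    refine ⟨?_, hj0⟩
    rcases lt_or_eq_of_le hj0 with h | h
    · have := lower_bound hr hkl h
      linarith
    · have : u kb ≤ u j := hmono hj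
      linarith
  · intro i j hi hj
    have hi0 : 0 ≤ r i := by
      by_contra h
      push_neg at h
      exact absurd (le_trans (hkbmin i h) hi) (not_le.2 hklb)
    have hj0 : r j ≤ 0 := by
      by_contra h
      push_neg at h
      exact absurd (le_trans hj (hklmax j h)) (not_le.2 hklb)
    have hui : u i ≤ u kl := hmono hi
    have huj : u kb ≤ u j := hmono hj
    rcases lt_or_eq_of_le hi0 with hip | hiz
    · rcases lt_or_eq_of_le hj0 with hjn | hjz
      · exact swap_ineq hr hip hjn
      · have := swap_ineq hr hip hkb
        linarith
    · rcases lt_or_eq_of_le hj0 with hjn | hjz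
      · have := swap_ineq hr hkl hjn
        linarith
      · linarith
end

section
/- For any nonzero equilibrium r ∈ E, there exists a critical member k* such that r_j ≤ 0 ≤ r_i, −u_j ≤ r_j, and u_i + r_i ≤ u_j + r_j for all i < k* ≤ j, and the total transfer satisfies T(r) = ∑_{i<k*} r_i = ∑_{j≥k*} (−r_j). -/
open Finset

/-!
A minimal transfer `r` cannot contain a promisee `a` (`r a > 0`) and a promiser `b` (`r b < 0`)
with `u a + r a > u b + r b` or `u b + r b < 0`: moving a small `ε` of promises from `a` back to
`b` keeps every large coalition's total nonnegative (compare a coalition containing `a` but not `b`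
with the one where `b` replaces `a`, resp. with the one enlarged by `b`) and lowers `T` by `ε`.
Moving `ε` from a non-participant `z` to a promiser `n` leaves `T` unchanged, so the result is
again minimal and the same exchange argument applies to it; this pins down the zeros.
The critical member `k*` is the first member that can stand on the promisers' side
(`IsPromiserSide`); by monotonicity of `u` every later member can too.
-/

section Transfer

variable {ι : Type*} [DecidableEq ι]

def transfer (r : ι → ℝ) (a b : ι) (ε : ℝ) : ι → ℝ := r - Pi.single a ε + Pi.single b ε

variable (r : ι → ℝ) {a b : ι} (ε : ℝ)

lemma transfer_apply_left (hab : a ≠ b) : transfer r a b ε a = r a - ε := by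
  simp [transfer, hab]

lemma transfer_apply_right (hab : a ≠ b) : transfer r a b ε b = r b + ε := by
  simp [transfer, hab.symm]

lemma transfer_apply_of_ne {i : ι} (hia : i ≠ a) (hib : i ≠ b) : transfer r a b ε i = r i := by
  simp [transfer, hia, hib]

lemma sum_transfer (s : Finset ι) :
    ∑ i ∈ s, transfer r a b ε i
      = ∑ i ∈ s, r i - (if a ∈ s then ε else 0) + (if b ∈ s then ε else 0) := by
  simp only [transfer, Pi.add_apply, Pi.sub_apply, sum_add_distrib, sum_sub_distrib, sum_pi_single']

lemma sum_abs_transfer [Fintype ι] (hab : a ≠ b) :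
    ∑ i, |transfer r a b ε i| = ∑ i, |r i| + (|r a - ε| - |r a|) + (|r b + ε| - |r b|) := by
  have hdiff : ∑ i, (|transfer r a b ε i| - |r i|) = (|r a - ε| - |r a|) + (|r b + ε| - |r b|) := by
    rw [sum_eq_add_of_mem a b (mem_univ a) (mem_univ b) hab, transfer_apply_left r ε hab,
      transfer_apply_right r ε hab]
    rintro c - ⟨hca, hcb⟩
    rw [transfer_apply_of_ne r ε hca hcb, sub_self]
  rw [sum_sub_distrib] at hdiff
  linarith

end Transfer

lemma exists_pos_and_exists_neg_of_sum_eq_zero {ι : Type*} [Fintype ι] {r : ι → ℝ}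
    (hsum : ∑ i, r i = 0) (hr : r ≠ 0) : (∃ p, 0 < r p) ∧ ∃ n, r n < 0 := by
  obtain ⟨i, hi⟩ := Function.ne_iff.1 hr
  obtain ⟨p, -, hp⟩ := exists_pos_of_sum_zero_of_exists_nonzero r hsum ⟨i, mem_univ i, hi⟩
  obtain ⟨n, -, hn⟩ := exists_pos_of_sum_zero_of_exists_nonzero (-r)
    (by simp [sum_neg_distrib, hsum]) ⟨i, mem_univ i, neg_ne_zero.2 hi⟩
  exact ⟨⟨p, hp⟩, n, neg_pos.1 hn⟩

def IsPromiserSide {ι : Type*} (u r : ι → ℝ) (j : ι) : Prop :=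
  r j ≤ 0 ∧ 0 ≤ u j + r j ∧ ∀ p, 0 < r p → u p + r p ≤ u j + r j

lemma IsPromiserSide.of_le {ι : Type*} [Preorder ι] {u r : ι → ℝ} (hmono : Monotone u) {j j' : ι}
    (hj : IsPromiserSide u r j) (hjj' : j ≤ j') (hr : 0 ≤ r j') : IsPromiserSide u r j' := by
  obtain ⟨hrj, hvj, hdom⟩ := hj
  have hu := hmono hjj'
  have hrj' : r j' = 0 := le_antisymm (not_lt.1 fun hpos => by linarith [hdom j' hpos]) hr
  exact ⟨hrj'.le, by linarith, fun p hp => by linarith [hdom p hp]⟩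

section Stable

variable {I κ : ℕ} {u r : Fin I → ℝ} {a b : Fin I}

lemma totT_transfer (r : Fin I → ℝ) (hab : a ≠ b) (ε : ℝ) :
    totT (transfer r a b ε) = totT r + ((|r a - ε| - |r a|) + (|r b + ε| - |r b|)) / 2 := by
  rw [totT, totT, sum_abs_transfer r ε hab]
  ring

lemma totT_eq_sum_of_sign (hsum : ∑ i, r i = 0) (P : Fin I → Prop) [DecidablePred P]
    (hpos : ∀ i, P i → 0 ≤ r i) (hneg : ∀ i, ¬ P i → r i ≤ 0) :
    totT r = ∑ i with P i, r i ∧ totT r = ∑ i with ¬ P i, -r i := by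
  have habs : ∑ i, |r i| = ∑ i with P i, r i + ∑ i with ¬ P i, -r i := by
    rw [← sum_filter_add_sum_filter_not univ P]
    congr 1 <;> refine sum_congr rfl fun i hi => ?_
    · exact abs_of_nonneg (hpos i (mem_filter.1 hi).2)
    · exact abs_of_nonpos (hneg i (mem_filter.1 hi).2)
  have hbal : ∑ i with P i, r i = ∑ i with ¬ P i, -r i := by
    rw [sum_neg_distrib]
    linarith [sum_filter_add_sum_filter_not univ P r]
  rw [totT, habs, hbal]
  constructor <;> ring

lemma sub_outcome_le_sum_of_swap (hr : inS0 κ u r) {C : Finset (Fin I)} (hC : I - κ + 1 ≤ #C)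
    (haC : a ∈ C) (hbC : b ∉ C) : (u a + r a) - (u b + r b) ≤ ∑ i ∈ C, (u i + r i) := by
  have hbC' : b ∉ C.erase a := fun h => hbC (mem_of_mem_erase h)
  have hcard : #(insert b (C.erase a)) = #C := by
    rw [card_insert_of_notMem hbC', card_erase_add_one haC]
  have hswap := hr.2 (insert b (C.erase a)) (hcard ▸ hC)
  rw [sum_insert hbC', sum_erase_eq_sub haC] at hswap
  linarith

lemma neg_outcome_le_sum_of_insert (hr : inS0 κ u r) {C : Finset (Fin I)} (hC : I - κ + 1 ≤ #C)
    (hbC : b ∉ C) : -(u b + r b) ≤ ∑ i ∈ C, (u i + r i) := by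
  have hins := hr.2 (insert b C) (by rw [card_insert_of_notMem hbC]; omega)
  rw [sum_insert hbC] at hins
  linarith

lemma inS0_transfer (hr : inS0 κ u r) {ε : ℝ} (hε : 0 ≤ ε)
    (hεv : ε ≤ max ((u a + r a) - (u b + r b)) (-(u b + r b))) :
    inS0 κ u (transfer r a b ε) := by
  refine ⟨by simp [sum_transfer, hr.1], fun C hC => ?_⟩
  have hsum : ∑ i ∈ C, (u i + transfer r a b ε i)
      = ∑ i ∈ C, (u i + r i) - (if a ∈ C then ε else 0) + (if b ∈ C then ε else 0) := by
    simp only [sum_add_distrib, sum_transfer]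
    ring
  have h0 := hr.2 C hC
  rw [hsum]
  by_cases haC : a ∈ C
  · by_cases hbC : b ∈ C
    · simpa [haC, hbC] using h0
    · have hmax := max_le (sub_outcome_le_sum_of_swap hr hC haC hbC)
        (neg_outcome_le_sum_of_insert hr hC hbC)
      simp only [haC, hbC, if_true, if_false]
      linarith
  · split_ifs <;> linarith

theorem outcome_le_of_inE (hr : inE κ u r) (ha : 0 < r a) (hb : r b < 0) :
    u a + r a ≤ u b + r b ∧ 0 ≤ u b + r b := by
  have hab : a ≠ b := by rintro rfl; linarith
  by_contra hbad
  set δ := max ((u a + r a) - (u b + r b)) (-(u b + r b))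
  have hδ : 0 < δ := by
    by_contra! hδ
    exact hbad ⟨by linarith [le_max_left ((u a + r a) - (u b + r b)) (-(u b + r b))],
      by linarith [le_max_right ((u a + r a) - (u b + r b)) (-(u b + r b))]⟩
  set ε := min (min (r a) (-r b)) δ
  have hε : 0 < ε := lt_min (lt_min ha (neg_pos.2 hb)) hδ
  have hεa : ε ≤ r a := (min_le_left _ _).trans (min_le_left _ _)
  have hεb : ε ≤ -r b := (min_le_left _ _).trans (min_le_right _ _)
  have hT : totT (transfer r a b ε) = totT r - ε := by
    rw [totT_transfer r hab, abs_of_pos ha, abs_of_neg hb, abs_of_nonneg (sub_nonneg.2 hεa),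
      abs_of_nonpos (by linarith)]
    ring
  have := hr.2 _ (inS0_transfer hr.1 hε.le (min_le_right _ _))
  linarith

theorem outcome_le_of_zero_of_lt (hr : inE κ u r) {p z n : Fin I} (hp : 0 < r p) (hz : r z = 0)
    (hn : r n < 0) (hzn : u n + r n < u z) : u p + r p ≤ u z ∧ 0 ≤ u z := by
  have hzn' : z ≠ n := by rintro rfl; linarith
  have hpz : p ≠ z := by rintro rfl; linarith
  have hpn : p ≠ n := by rintro rfl; linarith
  set ε := min (-r n) (u z - (u n + r n))
  have hε : 0 < ε := lt_min (by linarith) (by linarith)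
  have hεn : ε ≤ -r n := min_le_left _ _
  have hT : totT (transfer r z n ε) = totT r := by
    rw [totT_transfer r hzn', hz, zero_sub, abs_neg, abs_of_pos hε, abs_zero, abs_of_neg hn,
      abs_of_nonpos (by linarith)]
    ring
  have hεg : ε ≤ (u z + r z) - (u n + r n) := by
    rw [hz, add_zero]
    exact min_le_right _ _
  have hS : inS0 κ u (transfer r z n ε) := inS0_transfer hr.1 hε.le (le_max_of_le_left hεg)
  have hE : inE κ u (transfer r z n ε) := ⟨hS, fun r' hr' => hT ▸ hr.2 r' hr'⟩
  have hexch := outcome_le_of_inE hE (a := p) (b := z)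
    (by rwa [transfer_apply_of_ne r ε hpz hpn]) (by rw [transfer_apply_left r ε hzn', hz]; linarith)
  rw [transfer_apply_of_ne r ε hpz hpn, transfer_apply_left r ε hzn', hz] at hexch
  constructor <;> linarith [hexch.1, hexch.2]

lemma isPromiserSide_of_neg (hr : inE κ u r) {p n : Fin I} (hp : 0 < r p) (hn : r n < 0) :
    IsPromiserSide u r n :=
  ⟨hn.le, (outcome_le_of_inE hr hp hn).2, fun _ hq => (outcome_le_of_inE hr hq hn).1⟩

lemma nonneg_of_not_isPromiserSide (hr : inE κ u r) {p i : Fin I} (hp : 0 < r p)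
    (hi : ¬ IsPromiserSide u r i) : 0 ≤ r i :=
  not_lt.1 fun hneg => hi (isPromiserSide_of_neg hr hp hneg)

lemma outcome_le_of_not_isPromiserSide (hmono : Monotone u) (hr : inE κ u r) {p i j : Fin I}
    (hp : 0 < r p) (hi : ¬ IsPromiserSide u r i) (hj : IsPromiserSide u r j) (hij : i < j) :
    u i + r i ≤ u j + r j := by
  rcases (nonneg_of_not_isPromiserSide hr hp hi).lt_or_eq with hpos | hzero
  · exact hj.2.2 i hpos
  rcases hj.1.lt_or_eq with hneg | hzero'
  · by_contra! hlt
    rw [← hzero] at hlt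
    refine hi ⟨hzero.ge, ?_, fun q hq => ?_⟩
    · rw [← hzero, add_zero]
      exact (outcome_le_of_zero_of_lt hr hp hzero.symm hneg (by linarith)).2
    · rw [← hzero, add_zero]
      exact (outcome_le_of_zero_of_lt hr hq hzero.symm hneg (by linarith)).1
  · rw [← hzero, hzero']
    linarith [hmono hij.le]

end Stable

theorem push_toward_equality_general {I : ℕ} (κ : ℕ)
    (u : Fin I → ℝ) (hmono : Monotone u)
    (r : Fin I → ℝ) (hr : inE κ u r) (hrne : r ≠ 0) :
    ∃ k : Fin I,
      (∀ i : Fin I, i < k → 0 ≤ r i) ∧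
      (∀ j : Fin I, k ≤ j → -u j ≤ r j ∧ r j ≤ 0) ∧
      (∀ i j : Fin I, i < k → k ≤ j → u i + r i ≤ u j + r j) ∧
      totT r = ∑ i ∈ univ.filter (fun i => i < k), r i ∧
      totT r = ∑ j ∈ univ.filter (fun j => k ≤ j), (-r j) := by
  classical
  obtain ⟨⟨p, hp⟩, n, hn⟩ := exists_pos_and_exists_neg_of_sum_eq_zero hr.1.1 hrne
  set R := univ.filter (IsPromiserSide u r)
  have hRne : R.Nonempty := ⟨n, mem_filter.2 ⟨mem_univ n, isPromiserSide_of_neg hr hp hn⟩⟩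
  set k := R.min' hRne
  have hk : ∀ j, k ≤ j ↔ IsPromiserSide u r j := fun j =>
    ⟨fun hkj => (lt_or_ge (r j) 0).elim (isPromiserSide_of_neg hr hp)
        ((mem_filter.1 (R.min'_mem hRne)).2.of_le hmono hkj),
      fun hj => R.min'_le j (mem_filter.2 ⟨mem_univ j, hj⟩)⟩
  have hlt : ∀ i, i < k → ¬ IsPromiserSide u r i := fun i hi => by rwa [← hk, not_le]
  obtain ⟨hT₁, hT₂⟩ := totT_eq_sum_of_sign hr.1.1 (· < k)
    (fun i hi => nonneg_of_not_isPromiserSide hr hp (hlt i hi))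
    (fun j hj => ((hk j).1 (not_lt.1 hj)).1)
  refine ⟨k, fun i hi => nonneg_of_not_isPromiserSide hr hp (hlt i hi),
    fun j hj => ⟨by linarith [((hk j).1 hj).2.1], ((hk j).1 hj).1⟩,
    fun i j hi hj => outcome_le_of_not_isPromiserSide hmono hr hp (hlt i hi) ((hk j).1 hj)
      (hi.trans_le hj), hT₁, ?_⟩
  simpa only [not_lt] using hT₂

/-- push toward equality. For any nonzero equilibrium there is a
critical member `k*` separating promisees (below) from promisers (above), and the
total transfer equals the aggregate flow across `k*`. -/
theorem push_toward_equality {I : ℕ} (κ : ℕ) (hκ : 1 ≤ κ) (hκI : κ ≤ I)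
    (u : Fin I → ℝ) (hmono : Monotone u) (hu : 0 < ∑ i, u i)
    (r : Fin I → ℝ) (hr : inE κ u r) (hrne : r ≠ 0) :
    ∃ k : Fin I,
      (∀ i : Fin I, i < k → 0 ≤ r i) ∧
      (∀ j : Fin I, k ≤ j → -u j ≤ r j ∧ r j ≤ 0) ∧
      (∀ i j : Fin I, i < k → k ≤ j → u i + r i ≤ u j + r j) ∧
      totT r = ∑ i ∈ univ.filter (fun i => i < k), r i ∧
      totT r = ∑ j ∈ univ.filter (fun j => k ≤ j), (-r j) :=
  push_toward_equality_general κ u hmono r hr hrne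
end

section
/- Let C ⊆ I be a coalition with |C| = ĸ̂ such that u_i + r_i ≤ u_j + r_j for all i ∈ C and j ∉ C, and let r be zero-sum. Then r ∈ S₀ if and only if ∑_{i∈C} (u_i + r_i) ≥ 0. -/
open Finset

namespace Finset

variable {ι M : Type*} [AddCommMonoid M]

theorem sum_le_sum_of_card_le_of_separated [Preorder M] [AddLeftMono M] {a b : Finset ι}
    {f : ι → M} (c : M) (hc : 0 ≤ c) (hcard : #a ≤ #b) (ha : ∀ i ∈ a, f i ≤ c)
    (hb : ∀ j ∈ b, c ≤ f j) : ∑ i ∈ a, f i ≤ ∑ j ∈ b, f j :=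
  calc ∑ i ∈ a, f i ≤ #a • c := sum_le_card_nsmul a f c ha
    _ ≤ #b • c := nsmul_le_nsmul_left hc hcard
    _ ≤ ∑ j ∈ b, f j := card_nsmul_le_sum b f c hb

variable [LinearOrder M] [IsOrderedCancelAddMonoid M] [DecidableEq ι]

theorem sum_le_sum_of_card_le_of_forall_le_compl {s t : Finset ι} {f : ι → M}
    (hs : s.Nonempty) (hcard : #s ≤ #t) (hlow : ∀ i ∈ s, ∀ j ∉ s, f i ≤ f j)
    (hsum : 0 ≤ ∑ i ∈ s, f i) : ∑ i ∈ s, f i ≤ ∑ i ∈ t, f i := by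
  -- the maximum of `f` on `s` separates `s \ t` from `t \ s`, and it is nonnegative
  obtain ⟨i₀, hi₀, hfi₀⟩ := exists_le_of_sum_le (f := 0) (g := f) hs (by simpa using hsum)
  have hsdiff : ∑ i ∈ s \ t, f i ≤ ∑ j ∈ t \ s, f j :=
    sum_le_sum_of_card_le_of_separated (s.sup' hs f) (hfi₀.trans (le_sup' f hi₀))
      (card_sdiff_le_card_sdiff_iff.mpr hcard)
      (fun i hi => le_sup' f (mem_sdiff.mp hi).1)
      (fun j hj => sup'_le hs f fun i hi => hlow i hi j (mem_sdiff.mp hj).2)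
  calc ∑ i ∈ s, f i = ∑ i ∈ s ∩ t, f i + ∑ i ∈ s \ t, f i := (sum_inter_add_sum_sdiff s t f).symm
    _ ≤ ∑ i ∈ t ∩ s, f i + ∑ j ∈ t \ s, f j := by rw [inter_comm]; exact add_le_add_right hsdiff _
    _ = ∑ i ∈ t, f i := sum_inter_add_sum_sdiff t s f

end Finset

theorem stability_via_smallest_coalition_general {I : ℕ} (κ : ℕ)
    (u r : Fin I → ℝ) (hr : ∑ i, r i = 0)
    (C : Finset (Fin I)) (hC : C.card = I - κ + 1)
    (hord : ∀ i ∈ C, ∀ j : Fin I, j ∉ C → u i + r i ≤ u j + r j) :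
    inS0 κ u r ↔ 0 ≤ ∑ i ∈ C, (u i + r i) := by
  refine ⟨fun hS0 => hS0.2 C hC.ge, fun hsum => ⟨hr, fun C' hC' => hsum.trans ?_⟩⟩
  exact sum_le_sum_of_card_le_of_forall_le_compl (card_pos.mp (by omega)) (hC ▸ hC') hord hsum

/-- if `C` has cardinality `ĸ̂` and collects the smallest post-promise
intensities, then `r ∈ S₀` iff `∑_{i∈C}(u_i + r_i) ≥ 0`. -/
theorem stability_via_smallest_coalition {I : ℕ} (κ : ℕ) (hκ : 1 ≤ κ) (hκI : κ ≤ I)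
    (u r : Fin I → ℝ) (hr : ∑ i, r i = 0)
    (C : Finset (Fin I)) (hC : C.card = I - κ + 1)
    (hord : ∀ i ∈ C, ∀ j : Fin I, j ∉ C → u i + r i ≤ u j + r j) :
    inS0 κ u r ↔ 0 ≤ ∑ i ∈ C, (u i + r i) :=
  stability_via_smallest_coalition_general κ u r hr C hC hord
end

section
/- Suppose the number of reform supporters satisfies |{i : u_i ≥ 0}| < κ − 1 (with κ ≥ 2). Then r ∈ E if and only if: r_i = −u_i for every reform opponent i (those with u_i < 0), and −u_j ≤ r_j ≤ 0 for every reform supporter j, with ∑_{j: u_j≥0} r_j = −U^S where U^S = ∑_{i: u_i<0}(−u_i). Moreover every such r has total transfer T(r) = U^S. -/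
open Finset

/-- majority coercion with `|C^R| < κ - 1`. Equilibria are exactly the
profiles paying each reform opponent `-u_i` while supporters promise, in aggregate, `U^S`;
all have total transfer `U^S`. -/
theorem equilibrium_majority_coercion {I : ℕ} (κ : ℕ) (hκ : 2 ≤ κ) (hκI : κ ≤ I)
    (u : Fin I → ℝ) (hmono : Monotone u) (hu : 0 < ∑ i, u i)
    (hweak : (univ.filter (fun i : Fin I => 0 ≤ u i)).card < κ - 1) :
    ∀ r : Fin I → ℝ,
      (inE κ u r ↔
        ((∀ i : Fin I, u i < 0 → r i = -u i) ∧
         (∀ j : Fin I, 0 ≤ u j → -u j ≤ r j ∧ r j ≤ 0) ∧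
         ∑ j ∈ univ.filter (fun j : Fin I => 0 ≤ u j), r j
            = -(∑ i ∈ univ.filter (fun i : Fin I => u i < 0), (-u i)))) ∧
      (inE κ u r →
        totT r = ∑ i ∈ univ.filter (fun i : Fin I => u i < 0), (-u i)) := by
  classical
  set N : Finset (Fin I) := univ.filter (fun i : Fin I => u i < 0) with hNdef
  set S : Finset (Fin I) := univ.filter (fun i : Fin I => 0 ≤ u i) with hSdef
  have hSN : S = univ.filter (fun i : Fin I => ¬ u i < 0) := by
    rw [hSdef]; apply Finset.filter_congr; intro i _; simp [not_lt]
  have hsplit : ∀ f : Fin I → ℝ, ∑ i, f i = ∑ i ∈ N, f i + ∑ i ∈ S, f i := by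
    intro f
    rw [hSN, hNdef]
    exact (Finset.sum_filter_add_sum_filter_not univ _ f).symm
  have hcard : N.card + S.card = I := by
    rw [hSN, hNdef, Finset.card_filter_add_card_filter_not, Finset.card_univ,
      Fintype.card_fin]
  set U : ℝ := ∑ i ∈ N, (-u i) with hUdef
  have hNu : ∑ i ∈ N, u i = -U := by
    rw [hUdef, Finset.sum_neg_distrib, neg_neg]
  have hU0 : 0 ≤ U := by
    refine Finset.sum_nonneg (fun i hi => ?_)
    have : u i < 0 := by simpa [hNdef] using hi
    linarith
  have hNcard : I - κ + 1 + 1 ≤ N.card := by omega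
  -- `totT` as sum of positive parts, for zero-sum profiles
  have habs : ∀ r : Fin I → ℝ, (∑ i, r i = 0) → totT r = ∑ i, max (r i) 0 := by
    intro r hr
    have h1 : ∀ i : Fin I, |r i| = 2 * max (r i) 0 - r i := by
      intro i; rcases le_or_gt (r i) 0 with h | h
      · rw [abs_of_nonpos h, max_eq_right h]; ring
      · rw [abs_of_pos h, max_eq_left h.le]; ring
    rw [totT, Finset.sum_congr rfl (fun i _ => h1 i), Finset.sum_sub_distrib,
      ← Finset.mul_sum, hr]
    ring
  -- membership + transfer value for profiles of the characterized form
  have hBmem : ∀ r : Fin I → ℝ,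
      (∀ i : Fin I, u i < 0 → r i = -u i) → (∀ j : Fin I, 0 ≤ u j → -u j ≤ r j ∧ r j ≤ 0) →
      (∑ j ∈ S, r j = -U) → inS0 κ u r ∧ totT r = U := by
    intro r h1 h2 h3
    have hNr : ∑ i ∈ N, r i = U := by
      rw [hUdef]
      refine Finset.sum_congr rfl (fun i hi => ?_)
      exact h1 i (by simpa [hNdef] using hi)
    have hsum0 : ∑ i, r i = 0 := by rw [hsplit r, hNr, h3]; ring
    have hterm : ∀ i : Fin I, 0 ≤ u i + r i := by
      intro i
      rcases lt_or_ge (u i) 0 with h | h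
      · rw [h1 i h]; linarith
      · linarith [(h2 i h).1]
    refine ⟨⟨hsum0, fun C _ => Finset.sum_nonneg (fun i _ => hterm i)⟩, ?_⟩
    have e1 : ∑ i ∈ N, |r i| = U := by
      rw [hUdef]
      refine Finset.sum_congr rfl (fun i hi => ?_)
      have hi' : u i < 0 := by simpa [hNdef] using hi
      rw [h1 i hi', abs_of_nonneg (by linarith)]
    have e2 : ∑ j ∈ S, |r j| = U := by
      have h4 : ∑ j ∈ S, |r j| = ∑ j ∈ S, (-r j) := by
        refine Finset.sum_congr rfl (fun j hj => ?_)
        have hj' : 0 ≤ u j := by simpa [hSdef] using hj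
        exact abs_of_nonpos (h2 j hj').2
      rw [h4, Finset.sum_neg_distrib, h3, neg_neg]
    have : ∑ i, |r i| = 2 * U := by
      rw [hsplit (fun i => |r i|), e1, e2]; ring
    rw [totT, this]; ring
  -- lower bound on the transfer over S₀
  have hlow : ∀ r' : Fin I → ℝ, inS0 κ u r' → U ≤ totT r' := by
    intro r' hr'
    rw [habs r' hr'.1]
    have hNC := hr'.2 N (by omega)
    rw [Finset.sum_add_distrib, hNu] at hNC
    have h1 : ∑ i ∈ N, r' i ≤ ∑ i ∈ N, max (r' i) 0 :=
      Finset.sum_le_sum (fun i _ => le_max_left _ _)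
    have h2 : 0 ≤ ∑ j ∈ S, max (r' j) 0 :=
      Finset.sum_nonneg (fun j _ => le_max_right _ _)
    rw [hsplit (fun i => max (r' i) 0)]
    linarith
  -- equality analysis: stable minimizers have the characterized form
  have hforward : ∀ r : Fin I → ℝ, inS0 κ u r → totT r = U →
      (∀ i : Fin I, u i < 0 → r i = -u i) ∧
      (∀ j : Fin I, 0 ≤ u j → -u j ≤ r j ∧ r j ≤ 0) ∧ ∑ j ∈ S, r j = -U := by
    intro r hr hT
    have hmax := habs r hr.1
    have hNC := hr.2 N (by omega)
    rw [Finset.sum_add_distrib, hNu] at hNC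
    have hrN : U ≤ ∑ i ∈ N, r i := by linarith
    have hmaxN : ∑ i ∈ N, r i ≤ ∑ i ∈ N, max (r i) 0 :=
      Finset.sum_le_sum (fun i _ => le_max_left _ _)
    have hmaxS : 0 ≤ ∑ j ∈ S, max (r j) 0 :=
      Finset.sum_nonneg (fun j _ => le_max_right _ _)
    have htot : ∑ i ∈ N, max (r i) 0 + ∑ j ∈ S, max (r j) 0 = U := by
      rw [← hsplit (fun i => max (r i) 0), ← hmax, hT]
    have hSmax0 : ∑ j ∈ S, max (r j) 0 = 0 := by linarith
    have hrS : ∀ j ∈ S, r j ≤ 0 := by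
      intro j hj
      have hm := (Finset.sum_eq_zero_iff_of_nonneg
        (fun j _ => le_max_right (r j) 0)).mp hSmax0 j hj
      by_contra h
      push_neg at h
      rw [max_eq_left h.le] at hm
      linarith
    have hrNeq : ∑ i ∈ N, r i = U := le_antisymm (by linarith) hrN
    have hNzero : ∑ i ∈ N, (u i + r i) = 0 := by
      rw [Finset.sum_add_distrib, hNu, hrNeq]; ring
    have hterm_np : ∀ i ∈ N, u i + r i ≤ 0 := by
      intro i hi
      have hcardE : I - κ + 1 ≤ (N.erase i).card := by
        rw [Finset.card_erase_of_mem hi]; omega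
      have h2 := hr.2 (N.erase i) hcardE
      have h3 := Finset.add_sum_erase N (fun i => u i + r i) hi
      linarith [hNzero]
    have hNall : ∀ i ∈ N, u i + r i = 0 :=
      (Finset.sum_eq_zero_iff_of_nonpos hterm_np).mp hNzero
    refine ⟨?_, ?_, ?_⟩
    · intro i hi
      have := hNall i (by simp [hNdef, hi])
      linarith
    · intro j hj
      have hjS : j ∈ S := by simp [hSdef, hj]
      have hjN : j ∉ N := by simp [hNdef, not_lt, hj]
      refine ⟨?_, hrS j hjS⟩
      have hcardI : I - κ + 1 ≤ (insert j N).card := by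
        rw [Finset.card_insert_of_notMem hjN]; omega
      have h2 := hr.2 (insert j N) hcardI
      rw [Finset.sum_insert hjN, hNzero] at h2
      linarith
    · have h3 := hsplit r
      rw [hr.1, hrNeq] at h3
      linarith
  -- concrete witness: proportional payments from supporters
  set US : ℝ := ∑ j ∈ S, u j with hUSdef
  have hUS : US = (∑ i, u i) + U := by
    have := hsplit u
    rw [hNu] at this
    linarith
  have hUSpos : 0 < US := by rw [hUS]; linarith
  set c : ℝ := U / US with hcdef
  have hc0 : 0 ≤ c := div_nonneg hU0 hUSpos.le
  have hc1 : c ≤ 1 := by rw [hcdef, div_le_one hUSpos]; linarith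
  set r0 : Fin I → ℝ := fun i => if u i < 0 then -u i else -(c * u i) with hr0def
  have hr0a : ∀ i : Fin I, u i < 0 → r0 i = -u i := by
    intro i h; simp [hr0def, h]
  have hr0b : ∀ j : Fin I, 0 ≤ u j → -u j ≤ r0 j ∧ r0 j ≤ 0 := by
    intro j h
    have h4 : r0 j = -(c * u j) := by simp [hr0def, not_lt.mpr h]
    rw [h4]
    constructor
    · nlinarith
    · nlinarith
  have hr0c : ∑ j ∈ S, r0 j = -U := by
    have h4 : ∀ j ∈ S, r0 j = -(c * u j) := by
      intro j hj
      have : 0 ≤ u j := by simpa [hSdef] using hj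
      simp [hr0def, not_lt.mpr this]
    rw [Finset.sum_congr rfl h4, Finset.sum_neg_distrib, ← Finset.mul_sum, ← hUSdef,
      hcdef, div_mul_cancel₀ _ hUSpos.ne']
  have hr0 := hBmem r0 hr0a hr0b hr0c
  intro r
  constructor
  · constructor
    · rintro ⟨hrS0, hrmin⟩
      have hTle : totT r ≤ U := by
        have := hrmin r0 hr0.1
        linarith [hr0.2]
      exact hforward r hrS0 (le_antisymm hTle (hlow r hrS0))
    · rintro ⟨h1, h2, h3⟩
      have hm := hBmem r h1 h2 h3
      exact ⟨hm.1, fun r' hr' => by rw [hm.2]; exact hlow r' hr'⟩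
  · rintro ⟨hrS0, hrmin⟩
    have h1 := hlow r hrS0
    have h2 := hrmin r0 hr0.1
    linarith [hr0.2]
end

section
/- Suppose the reform supporters number exactly κ − 1, i.e. n = ĸ̂ where n = |{i : u_i < 0}|. Then r ∈ E if and only if: r_i ≥ 0 for all i ≤ n with ∑_{i≤n} r_i = U^S; −u_j ≤ r_j ≤ 0 for all j > n with ∑_{j>n} r_j = −U^S; and u_i + r_i ≤ u_j + r_j for every i ≤ n < j. All such r have T(r) = U^S. -/
open Finset

lemma card_filter_coe_lt {I m : ℕ} (h : m ≤ I) :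
    (univ.filter (fun i : Fin I => (i : ℕ) < m)).card = m := by
  have he : univ.filter (fun i : Fin I => (i : ℕ) < m)
      = (univ : Finset (Fin m)).map (Fin.castLEEmb h) := by
    ext i
    simp only [mem_filter, mem_univ, true_and, mem_map, Fin.castLEEmb, Fin.castLE,
      Function.Embedding.coeFn_mk]
    constructor
    · intro hi; exact ⟨⟨i, hi⟩, rfl⟩
    · rintro ⟨j, rfl⟩; exact j.isLt
  rw [he, card_map, card_univ, Fintype.card_fin]

lemma coalition_nonneg {I n : ℕ} (hnI : n ≤ I) (v : Fin I → ℝ)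
    (hsum : ∑ i ∈ univ.filter (fun i : Fin I => (i : ℕ) < n), v i = 0)
    (hQ : ∀ j : Fin I, n ≤ (j : ℕ) → 0 ≤ v j)
    (hle : ∀ i j : Fin I, (i : ℕ) < n → n ≤ (j : ℕ) → v i ≤ v j)
    (C : Finset (Fin I)) (hC : n ≤ C.card) :
    0 ≤ ∑ i ∈ C, v i := by
  set P : Finset (Fin I) := univ.filter (fun i : Fin I => (i : ℕ) < n) with hP
  set A : Finset (Fin I) := C.filter (fun i : Fin I => (i : ℕ) < n) with hA
  set B : Finset (Fin I) := C.filter (fun i : Fin I => ¬ (i : ℕ) < n) with hB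
  set M : Finset (Fin I) := P \ C with hM
  have hCsplit : ∑ i ∈ A, v i + ∑ i ∈ B, v i = ∑ i ∈ C, v i :=
    Finset.sum_filter_add_sum_filter_not C _ v
  have hAPC : A = P ∩ C := by
    ext i; simp [hA, hP, and_comm]
  have hPsplit : ∑ i ∈ A, v i + ∑ i ∈ M, v i = 0 := by
    rw [hAPC, hM]
    calc ∑ i ∈ P ∩ C, v i + ∑ i ∈ P \ C, v i
        = ∑ i ∈ P, v i := Finset.sum_inter_add_sum_sdiff P C v
      _ = 0 := hsum
  have hcardP : P.card = n := card_filter_coe_lt hnI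
  have hcardAB : A.card + B.card = C.card :=
    Finset.card_filter_add_card_filter_not (s := C) (p := fun i : Fin I => (i : ℕ) < n)
  have hcardAM : A.card + M.card = P.card := by
    rw [hAPC, hM]
    exact Finset.card_inter_add_card_sdiff P C
  have hMB : M.card ≤ B.card := by omega
  have hBnonneg : 0 ≤ ∑ j ∈ B, v j := by
    apply Finset.sum_nonneg
    intro j hj
    exact hQ j (by simpa [hB, not_lt] using (Finset.mem_filter.mp hj).2)
  have hMle : ∑ i ∈ M, v i ≤ ∑ j ∈ B, v j := by
    rcases Finset.eq_empty_or_nonempty M with hMe | hMne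
    · simpa [hMe] using hBnonneg
    · have hBne : B.Nonempty := Finset.card_pos.mp (lt_of_lt_of_le (Finset.card_pos.mpr hMne) hMB)
      obtain ⟨j₀, hj₀B, hj₀min⟩ := Finset.exists_min_image B v hBne
      have hj₀n : n ≤ (j₀ : ℕ) := by
        simpa [hB, not_lt] using (Finset.mem_filter.mp hj₀B).2
      have h1 : ∑ i ∈ M, v i ≤ M.card • v j₀ := by
        apply Finset.sum_le_card_nsmul
        intro i hi
        have hin : (i : ℕ) < n := by
          have := (Finset.mem_sdiff.mp hi).1
          simpa [hP] using this
        exact hle i j₀ hin hj₀n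
      have h2 : (M.card : ℝ) * v j₀ ≤ (B.card : ℝ) * v j₀ :=
        mul_le_mul_of_nonneg_right (by exact_mod_cast hMB) (hQ j₀ hj₀n)
      have h3 : B.card • v j₀ ≤ ∑ j ∈ B, v j :=
        Finset.card_nsmul_le_sum B v (v j₀) (fun j hj => hj₀min j hj)
      rw [nsmul_eq_mul] at h1 h3
      linarith
  linarith

/-- one member short of decisiveness (`n = ĸ̂`, i.e. `|C^R| = κ - 1`).
Characterization of the set of equilibria; all have total transfer `U^S`. -/
theorem equilibrium_one_short {I : ℕ} (κ : ℕ) (hκ : 1 ≤ κ) (hκI : κ ≤ I)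
    (u : Fin I → ℝ) (hmono : Monotone u) (hu : 0 < ∑ i, u i)
    (n : ℕ) (hn : n = (univ.filter (fun i : Fin I => u i < 0)).card)
    (hnκ : n = I - κ + 1) :
    ∀ r : Fin I → ℝ,
      (inE κ u r ↔
        ((∀ i : Fin I, (i : ℕ) < n → 0 ≤ r i) ∧
         (∑ i ∈ univ.filter (fun i : Fin I => (i : ℕ) < n), r i
            = ∑ i ∈ univ.filter (fun i : Fin I => (i : ℕ) < n), (-u i)) ∧
         (∀ j : Fin I, n ≤ (j : ℕ) → -u j ≤ r j ∧ r j ≤ 0) ∧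
         (∑ j ∈ univ.filter (fun j : Fin I => n ≤ (j : ℕ)), r j
            = -(∑ i ∈ univ.filter (fun i : Fin I => (i : ℕ) < n), (-u i))) ∧
         (∀ i j : Fin I, (i : ℕ) < n → n ≤ (j : ℕ) → u i + r i ≤ u j + r j))) ∧
      (inE κ u r →
        totT r = ∑ i ∈ univ.filter (fun i : Fin I => (i : ℕ) < n), (-u i)) := by
  have hnI : n ≤ I := by
    rw [hn]
    simpa using Finset.card_filter_le (univ : Finset (Fin I)) (fun i => u i < 0)
  have hn1 : 1 ≤ n := by omega
  have hneg : ∀ i : Fin I, u i < 0 ↔ (i : ℕ) < n := by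
    intro i
    constructor
    · intro hi
      by_contra hcon
      push_neg at hcon
      have hsub : univ.filter (fun j : Fin I => (j : ℕ) < (i : ℕ) + 1)
          ⊆ univ.filter (fun j : Fin I => u j < 0) := by
        intro j hj
        simp only [mem_filter, mem_univ, true_and] at hj ⊢
        have hji : j ≤ i := by rw [Fin.le_def]; omega
        exact lt_of_le_of_lt (hmono hji) hi
      have hcard := Finset.card_le_card hsub
      rw [card_filter_coe_lt (by omega : (i : ℕ) + 1 ≤ I), ← hn] at hcard
      omega
    · intro hi
      by_contra hcon
      push_neg at hcon
      have hsub : univ.filter (fun j : Fin I => u j < 0)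
          ⊆ univ.filter (fun j : Fin I => (j : ℕ) < (i : ℕ)) := by
        intro j hj
        simp only [mem_filter, mem_univ, true_and] at hj ⊢
        by_contra hji
        push_neg at hji
        have hij : i ≤ j := by rw [Fin.le_def]; omega
        linarith [hmono hij]
      have hcard := Finset.card_le_card hsub
      rw [card_filter_coe_lt (le_of_lt i.isLt), ← hn] at hcard
      omega
  intro r
  set P : Finset (Fin I) := univ.filter (fun i : Fin I => (i : ℕ) < n) with hPdef
  set Q : Finset (Fin I) := univ.filter (fun j : Fin I => n ≤ (j : ℕ)) with hQdef
  set US : ℝ := ∑ i ∈ P, (-u i) with hUSdef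
  have hcardP : P.card = n := card_filter_coe_lt hnI
  have hsplitf : ∀ f : Fin I → ℝ, ∑ i ∈ P, f i + ∑ i ∈ Q, f i = ∑ i, f i := by
    intro f
    have h := Finset.sum_filter_add_sum_filter_not univ (fun i : Fin I => (i : ℕ) < n) f
    have hQ' : Q = univ.filter (fun i : Fin I => ¬ (i : ℕ) < n) := by
      rw [hQdef]; ext j; simp [not_lt]
    rw [hPdef, hQ']
    exact h
  have hPu : ∑ i ∈ P, u i = -US := by
    simp only [hUSdef, Finset.sum_neg_distrib, neg_neg]
  have hUSnonneg : 0 ≤ US := by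
    apply Finset.sum_nonneg
    intro i hi
    have : (i : ℕ) < n := by simpa [hPdef] using hi
    have := (hneg i).mpr this
    linarith
  have hmemP : ∀ i : Fin I, (i : ℕ) < n → i ∈ P := by
    intro i hi; simp [hPdef, hi]
  have hnotP : ∀ j : Fin I, n ≤ (j : ℕ) → j ∉ P := by
    intro j hj; simp [hPdef]; omega
  have hmemQ : ∀ j : Fin I, n ≤ (j : ℕ) → j ∈ Q := by
    intro j hj; simp [hQdef, hj]
  have huQ : ∀ j : Fin I, n ≤ (j : ℕ) → 0 ≤ u j := by
    intro j hj
    by_contra hcon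
    push_neg at hcon
    have := (hneg j).mp hcon
    omega
  -- lower bound on sums over P
  have lb : ∀ r' : Fin I → ℝ, inS0 κ u r' → US ≤ ∑ i ∈ P, r' i := by
    intro r' hr'
    have hc : I - κ + 1 ≤ P.card := by rw [hcardP]; omega
    have h0 := hr'.2 P hc
    rw [Finset.sum_add_distrib] at h0
    linarith
  -- lower bound on totT
  have lbT : ∀ r' : Fin I → ℝ, inS0 κ u r' → US ≤ totT r' := by
    intro r' hr'
    have h1 := lb r' hr'
    have h2 : ∑ i ∈ P, |r' i| + ∑ i ∈ Q, |r' i| = ∑ i, |r' i| := hsplitf _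
    have h3 : ∑ i ∈ P, r' i ≤ ∑ i ∈ P, |r' i| :=
      Finset.sum_le_sum (fun i _ => le_abs_self _)
    have h4 : -∑ i ∈ Q, r' i ≤ ∑ i ∈ Q, |r' i| := by
      rw [← Finset.sum_neg_distrib]
      exact Finset.sum_le_sum (fun i _ => neg_le_abs _)
    have h6 : ∑ i ∈ P, r' i + ∑ i ∈ Q, r' i = 0 := by
      rw [hsplitf r']; exact hr'.1
    simp only [totT]
    linarith
  -- membership and value for the characterized set
  have memS0 : ∀ r' : Fin I → ℝ,
      (∀ i : Fin I, (i : ℕ) < n → 0 ≤ r' i) →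
      (∑ i ∈ P, r' i = US) →
      (∀ j : Fin I, n ≤ (j : ℕ) → -u j ≤ r' j ∧ r' j ≤ 0) →
      (∑ j ∈ Q, r' j = -US) →
      (∀ i j : Fin I, (i : ℕ) < n → n ≤ (j : ℕ) → u i + r' i ≤ u j + r' j) →
      inS0 κ u r' ∧ totT r' = US := by
    intro r' h1 h2 h3 h4 h5
    have hz : ∑ i, r' i = 0 := by
      rw [← hsplitf r', h2, h4]; ring
    have hPv : ∑ i ∈ P, (u i + r' i) = 0 := by
      rw [Finset.sum_add_distrib, hPu, h2]; ring
    constructor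
    · refine ⟨hz, ?_⟩
      intro C hC
      apply coalition_nonneg hnI (fun i => u i + r' i) ?_ ?_ h5 C (by omega)
      · rw [← hPdef]; exact hPv
      · intro j hj
        have := (h3 j hj).1
        linarith
    · have hPabs : ∑ i ∈ P, |r' i| = US := by
        rw [← h2]
        exact Finset.sum_congr rfl (fun i hi => abs_of_nonneg (h1 i (by simpa [hPdef] using hi)))
      have hQabs : ∑ j ∈ Q, |r' j| = US := by
        have : ∑ j ∈ Q, |r' j| = ∑ j ∈ Q, (-r' j) :=
          Finset.sum_congr rfl (fun j hj =>
            abs_of_nonpos ((h3 j (by simpa [hQdef] using hj)).2))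
        rw [this, Finset.sum_neg_distrib, h4]; ring
      have := hsplitf (fun i => |r' i|)
      simp only [totT]
      rw [← this, hPabs, hQabs]
      ring
  -- existence of a minimizer
  have exist : ∃ r₀ : Fin I → ℝ, inS0 κ u r₀ ∧ totT r₀ = US := by
    set D : ℝ := ∑ j ∈ Q, u j with hD
    have hDval : D = (∑ i, u i) + US := by
      have := hsplitf u
      rw [hD]; linarith
    have hDpos : 0 < D := by linarith
    set t : ℝ := US / D with ht
    have ht0 : 0 ≤ t := div_nonneg hUSnonneg hDpos.le
    have ht1 : t ≤ 1 := by
      rw [ht, div_le_one hDpos]; linarith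
    have htD : t * D = US := div_mul_cancel₀ US hDpos.ne'
    refine ⟨fun i => if (i : ℕ) < n then -u i else -(t * u i), memS0 _ ?_ ?_ ?_ ?_ ?_⟩
    · intro i hi
      simp only [if_pos hi]
      have := (hneg i).mpr hi
      linarith
    · have hcong : ∑ i ∈ P, (if (i : ℕ) < n then -u i else -(t * u i)) = ∑ i ∈ P, (-u i) := by
        apply Finset.sum_congr rfl
        intro i hi
        have hin : (i : ℕ) < n := by simpa [hPdef] using hi
        exact if_pos hin
      rw [hcong]
    · intro j hj
      have hjn : ¬ (j : ℕ) < n := not_lt.mpr hj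
      have huj := huQ j hj
      simp only [if_neg hjn]
      constructor
      · nlinarith
      · nlinarith
    · have hterm : ∑ j ∈ Q, (if (j : ℕ) < n then -u j else -(t * u j)) = ∑ j ∈ Q, (-(t * u j)) :=
        Finset.sum_congr rfl (fun j hj =>
          if_neg (not_lt.mpr (show n ≤ (j : ℕ) by simpa [hQdef] using hj)))
      rw [hterm, Finset.sum_neg_distrib, ← Finset.mul_sum, ← hD, htD]
    · intro i j hi hj
      have hjn : ¬ (j : ℕ) < n := not_lt.mpr hj
      have huj := huQ j hj
      simp only [if_pos hi, if_neg hjn]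
      nlinarith
  constructor
  · constructor
    · -- forward
      intro hrE
      obtain ⟨r₀, hr₀S, hr₀T⟩ := exist
      have hTub : totT r ≤ US := hr₀T ▸ hrE.2 r₀ hr₀S
      have hTlb : US ≤ totT r := lbT r hrE.1
      have hT : totT r = US := le_antisymm hTub hTlb
      have hsumabs : ∑ i, |r i| = 2 * US := by
        simp only [totT] at hT; linarith
      have hsP := lb r hrE.1
      have h2 : ∑ i ∈ P, |r i| + ∑ i ∈ Q, |r i| = ∑ i, |r i| := hsplitf _
      have h3 : ∑ i ∈ P, r i ≤ ∑ i ∈ P, |r i| :=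
        Finset.sum_le_sum (fun i _ => le_abs_self _)
      have h4 : -∑ i ∈ Q, r i ≤ ∑ i ∈ Q, |r i| := by
        rw [← Finset.sum_neg_distrib]
        exact Finset.sum_le_sum (fun i _ => neg_le_abs _)
      have h6 : ∑ i ∈ P, r i + ∑ i ∈ Q, r i = 0 := by
        rw [hsplitf r]; exact hrE.1.1
      have hsPeq : ∑ i ∈ P, r i = US := by linarith
      have hsQeq : ∑ j ∈ Q, r j = -US := by linarith
      have heqP : ∑ i ∈ P, |r i| = ∑ i ∈ P, r i := by linarith
      have heqQ : ∑ j ∈ Q, |r j| = -∑ j ∈ Q, r j := by linarith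
      have hnonnegP : ∀ i ∈ P, 0 ≤ r i := by
        have hz : ∑ i ∈ P, (|r i| - r i) = 0 := by
          rw [Finset.sum_sub_distrib]; linarith
        have h0 := (Finset.sum_eq_zero_iff_of_nonneg
          (fun i _ => sub_nonneg.mpr (le_abs_self (r i)))).mp hz
        intro i hi
        have := h0 i hi
        have habs : |r i| = r i := by linarith
        calc (0:ℝ) ≤ |r i| := abs_nonneg _
          _ = r i := habs
      have hnonposQ : ∀ j ∈ Q, r j ≤ 0 := by
        have hz : ∑ j ∈ Q, (|r j| + r j) = 0 := by
          rw [Finset.sum_add_distrib]; linarith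
        have h0 := (Finset.sum_eq_zero_iff_of_nonneg
          (fun j _ => by linarith [neg_abs_le (r j)])).mp hz
        intro j hj
        have := h0 j hj
        linarith [abs_nonneg (r j)]
      have hPv : ∑ i ∈ P, (u i + r i) = 0 := by
        rw [Finset.sum_add_distrib, hPu, hsPeq]; ring
      have hvj : ∀ j : Fin I, n ≤ (j : ℕ) → 0 ≤ u j + r j := by
        intro j hj
        have hjP := hnotP j hj
        have hc : I - κ + 1 ≤ (insert j P).card := by
          rw [Finset.card_insert_of_notMem hjP, hcardP]; omega
        have h0 := hrE.1.2 (insert j P) hc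
        rw [Finset.sum_insert hjP] at h0
        linarith
      refine ⟨?_, hsPeq, ?_, hsQeq, ?_⟩
      · intro i hi; exact hnonnegP i (hmemP i hi)
      · intro j hj
        exact ⟨by linarith [hvj j hj], hnonposQ j (hmemQ j hj)⟩
      · intro i j hi hj
        have hiP := hmemP i hi
        have hjP := hnotP j hj
        have hjPe : j ∉ P.erase i := fun h => hjP (Finset.mem_of_mem_erase h)
        have hc : I - κ + 1 ≤ (insert j (P.erase i)).card := by
          rw [Finset.card_insert_of_notMem hjPe, Finset.card_erase_of_mem hiP, hcardP]
          omega
        have h0 := hrE.1.2 (insert j (P.erase i)) hc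
        rw [Finset.sum_insert hjPe] at h0
        have herase : (u i + r i) + ∑ x ∈ P.erase i, (u x + r x) = ∑ x ∈ P, (u x + r x) :=
          Finset.add_sum_erase P (fun x => u x + r x) hiP
        linarith
    · -- backward
      rintro ⟨h1, h2, h3, h4, h5⟩
      obtain ⟨hS0, hT⟩ := memS0 r h1 h2 h3 h4 h5
      refine ⟨hS0, fun r' hr' => ?_⟩
      rw [hT]
      exact lbT r' hr'
  · intro hrE
    obtain ⟨r₀, hr₀S, hr₀T⟩ := exist
    have h1 := hrE.2 r₀ hr₀S
    have h2 := lbT r hrE.1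
    linarith
end

section
/- Assume |{i : u_i ≥ 0}| ≥ κ, κ ≥ 2, and 0 < G^S ≤ ΔU_{ĸ̂} where G^S = −∑_{i=1}^{ĸ̂} u_i and ΔU_{ĸ̂} = ∑_{j>ĸ̂}(u_j − u_{ĸ̂}). Then r ∈ E if and only if: (1) −u_j ≤ r_j ≤ 0 ≤ r_i for all i ≤ ĸ̂ < j; (2) u_i + r_i ≤ u_j + r_j for all i ≤ ĸ̂ < j; (3) ∑_{i≤ĸ̂} r_i = G^S = −∑_{j>ĸ̂} r_j. Moreover every equilibrium has T(r) = G^S. -/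
open Finset

/-!
Write `L = {i ≤ ĸ̂}`. Stability on the coalition `L` itself gives `∑_L r ≥ G^S`, and for a
zero-sum `r` we have `T(r) ≥ ∑_L r`, so `T ≥ G^S` on `S₀`. Equality forces `L` to only receive
and its complement to only pay, with `∑_L (u + r) = 0`; stability on `L ∪ {j}` and on
`(L \ {i}) ∪ {j}` then gives individual rationality and the ordering (2). Conversely (1)–(3) imply
stability, because ex post `L` sits below everyone else, so it has the least total intensity
among coalitions with at least `ĸ̂` members. The bound `G^S` is attained by shrinking the
intensities on both sides proportionally towards `u_{ĸ̂} ≥ 0`, which `G^S ≤ ΔU_{ĸ̂}` allows.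
-/

section OrderedSum

variable {ι M : Type*} [AddCommMonoid M] [LinearOrder M] [IsOrderedAddMonoid M]
  {f : ι → M} {s t : Finset ι}

lemma sum_le_sum_of_card_le_of_forall_le
    (hcard : #s ≤ #t) (hle : ∀ i ∈ s, ∀ j ∈ t, f i ≤ f j) (hnonneg : ∀ j ∈ t, 0 ≤ f j) :
    ∑ i ∈ s, f i ≤ ∑ j ∈ t, f j := by
  obtain rfl | ht := t.eq_empty_or_nonempty
  · simp [card_eq_zero.1 (Nat.le_zero.1 hcard)]
  obtain ⟨j₀, hj₀, hmin⟩ := t.exists_min_image f ht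
  calc ∑ i ∈ s, f i ≤ #s • f j₀ := sum_le_card_nsmul s f _ fun i hi => hle i hi j₀ hj₀
    _ ≤ #t • f j₀ := nsmul_le_nsmul_left (hnonneg j₀ hj₀) hcard
    _ ≤ ∑ j ∈ t, f j := card_nsmul_le_sum t f _ hmin

lemma sum_le_sum_of_card_le_of_forall_le_compl [DecidableEq ι]
    (hcard : #s ≤ #t) (hle : ∀ i ∈ s, ∀ j ∉ s, f i ≤ f j) (hnonneg : ∀ j ∉ s, 0 ≤ f j) :
    ∑ i ∈ s, f i ≤ ∑ j ∈ t, f j := by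
  have hsdiff : ∑ i ∈ s \ t, f i ≤ ∑ j ∈ t \ s, f j :=
    sum_le_sum_of_card_le_of_forall_le (card_sdiff_le_card_sdiff_iff.2 hcard)
      (fun i hi j hj => hle i (mem_sdiff.1 hi).1 j (mem_sdiff.1 hj).2)
      (fun j hj => hnonneg j (mem_sdiff.1 hj).2)
  rw [← sum_inter_add_sum_sdiff s t, ← sum_inter_add_sum_sdiff t s, inter_comm]
  exact add_le_add_right hsdiff _

end OrderedSum

lemma exists_nonneg_le_sum_eq {ι K : Type*} [Field K] [LinearOrder K] [IsStrictOrderedRing K]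
    {s : Finset ι} {w : ι → K} {G : K}
    (hw : ∀ i ∈ s, 0 ≤ w i) (hG : 0 ≤ G) (hGw : G ≤ ∑ i ∈ s, w i) :
    ∃ x : ι → K, (∀ i ∈ s, 0 ≤ x i ∧ x i ≤ w i) ∧ ∑ i ∈ s, x i = G := by
  set W := ∑ i ∈ s, w i
  have hc : 0 ≤ G / W := div_nonneg hG (hG.trans hGw)
  have hc1 : G / W ≤ 1 := div_le_one_of_le₀ hGw (hG.trans hGw)
  refine ⟨fun i => G / W * w i, fun i hi => ⟨mul_nonneg hc (hw i hi), ?_⟩, ?_⟩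
  · exact mul_le_of_le_one_left (hw i hi) hc1
  · rw [← mul_sum]
    obtain hW | hW := eq_or_ne W 0
    · simp [hW, le_antisymm (hW ▸ hGw) hG]
    · exact div_mul_cancel₀ G hW

lemma nonneg_of_le_card_filter_nonneg {α : Type*} [LinearOrder α] [Zero α] {I : ℕ}
    {u : Fin I → α} (hu : Monotone u) (a : Fin I)
    (hcard : I - a ≤ #{i | 0 ≤ u i}) : 0 ≤ u a := by
  by_contra! ha
  have hsub : ({i | 0 ≤ u i} : Finset (Fin I)) ⊆ Ioi a := fun i hi => by
    simp only [mem_filter, mem_univ, true_and] at hi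
    exact mem_Ioi.2 (lt_of_not_ge fun hia => (hu hia).not_gt (ha.trans_le hi))
  have := (card_le_card hsub).trans_eq (Fin.card_Ioi a)
  omega

section Transfer

variable {I : ℕ}

lemma two_mul_totT_sub_sum {r : Fin I → ℝ} (hr : ∑ i, r i = 0) (s : Finset (Fin I)) :
    2 * (totT r - ∑ i ∈ s, r i) = ∑ i ∈ s, (|r i| - r i) + ∑ i ∈ sᶜ, (|r i| + r i) := by
  have hcompl := sum_add_sum_compl s r
  have habs := sum_add_sum_compl s fun i => |r i|
  rw [totT, sum_sub_distrib, sum_add_distrib]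
  linarith

lemma sum_le_totT {r : Fin I → ℝ} (hr : ∑ i, r i = 0) (s : Finset (Fin I)) :
    ∑ i ∈ s, r i ≤ totT r := by
  have := two_mul_totT_sub_sum hr s
  have h₁ : 0 ≤ ∑ i ∈ s, (|r i| - r i) := sum_nonneg fun i _ => sub_nonneg.2 (le_abs_self _)
  have h₂ : 0 ≤ ∑ i ∈ sᶜ, (|r i| + r i) := sum_nonneg fun i _ => by
    linarith [neg_abs_le (r i)]
  linarith

lemma totT_eq_sum_iff {r : Fin I → ℝ} (hr : ∑ i, r i = 0) (s : Finset (Fin I)) :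
    totT r = ∑ i ∈ s, r i ↔ (∀ i ∈ s, 0 ≤ r i) ∧ ∀ i ∉ s, r i ≤ 0 := by
  have h₁ : ∀ i ∈ s, 0 ≤ |r i| - r i := fun i _ => sub_nonneg.2 (le_abs_self _)
  have h₂ : ∀ i ∈ sᶜ, 0 ≤ |r i| + r i := fun i _ => by linarith [neg_abs_le (r i)]
  rw [← sub_eq_zero, ← mul_eq_zero_iff_left two_ne_zero, two_mul_totT_sub_sum hr s,
    add_eq_zero_iff_of_nonneg (sum_nonneg h₁) (sum_nonneg h₂),
    sum_eq_zero_iff_of_nonneg h₁, sum_eq_zero_iff_of_nonneg h₂]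
  simp only [sub_eq_zero, abs_eq_self, mem_compl, add_eq_zero_iff_eq_neg, abs_eq_neg_self]

end Transfer

/-- Conditions (1)–(3) of the theorem, with `s = {i ≤ ĸ̂}` and `G = G^S`. -/
def IsPreemption {I : ℕ} (s : Finset (Fin I)) (u r : Fin I → ℝ) (G : ℝ) : Prop :=
  (∀ i ∈ s, 0 ≤ r i) ∧ (∀ j ∉ s, -u j ≤ r j ∧ r j ≤ 0) ∧
    (∀ i j, i ∈ s → j ∉ s → u i + r i ≤ u j + r j) ∧ ∑ i ∈ s, r i = G ∧ ∑ j ∈ sᶜ, r j = -G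

section Preemption

variable {I κ : ℕ} {u r : Fin I → ℝ} {s : Finset (Fin I)}

lemma exists_isPreemption {m G : ℝ} (hm : 0 ≤ m) (hG : 0 ≤ G)
    (hlow : ∀ i ∈ s, u i ≤ m) (hhigh : ∀ j ∉ s, m ≤ u j)
    (hGlow : G ≤ ∑ i ∈ s, (m - u i)) (hGhigh : G ≤ ∑ j ∈ sᶜ, (u j - m)) :
    ∃ r, IsPreemption s u r G := by
  obtain ⟨x, hx, hxsum⟩ :=
    exists_nonneg_le_sum_eq (fun i hi => sub_nonneg.2 (hlow i hi)) hG hGlow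
  obtain ⟨y, hy, hysum⟩ :=
    exists_nonneg_le_sum_eq (fun j hj => sub_nonneg.2 (hhigh j (mem_compl.1 hj))) hG hGhigh
  have hx' : ∀ i ∈ s, s.piecewise x (-y) i = x i := fun i hi => piecewise_eq_of_mem _ _ _ hi
  have hy' : ∀ j ∉ s, s.piecewise x (-y) j = -y j := fun j hj => piecewise_eq_of_notMem _ _ _ hj
  refine ⟨s.piecewise x (-y), fun i hi => ?_, fun j hj => ?_, fun i j hi hj => ?_, ?_, ?_⟩
  · rw [hx' i hi]; exact (hx i hi).1
  · have := hy j (mem_compl.2 hj)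
    rw [hy' j hj]; constructor <;> linarith
  · rw [hx' i hi, hy' j hj]
    linarith [(hx i hi).2, (hy j (mem_compl.2 hj)).2]
  · rw [sum_congr rfl hx', hxsum]
  · rw [sum_congr rfl fun j hj => hy' j (mem_compl.1 hj), sum_neg_distrib, hysum]

lemma IsPreemption.sum_eq_zero {G : ℝ} (h : IsPreemption s u r G) : ∑ i, r i = 0 := by
  rw [← sum_add_sum_compl s r, h.2.2.2.1, h.2.2.2.2, add_neg_cancel]

lemma IsPreemption.totT_eq {G : ℝ} (h : IsPreemption s u r G) : totT r = G := by
  rw [(totT_eq_sum_iff h.sum_eq_zero s).2 ⟨h.1, fun j hj => (h.2.1 j hj).2⟩, h.2.2.2.1]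

lemma IsPreemption.inS0 (hs : #s ≤ I - κ + 1) (h : IsPreemption s u r (-∑ i ∈ s, u i)) :
    inS0 κ u r := by
  refine ⟨h.sum_eq_zero, fun C hC => ?_⟩
  obtain ⟨-, hhigh, hord, hsum, -⟩ := h
  calc (0 : ℝ) = ∑ i ∈ s, (u i + r i) := by rw [sum_add_distrib, hsum, add_neg_cancel]
    _ ≤ ∑ i ∈ C, (u i + r i) :=
      sum_le_sum_of_card_le_of_forall_le_compl (hs.trans hC) (fun i hi j hj => hord i j hi hj)
        fun j hj => by linarith [(hhigh j hj).1]

lemma neg_sum_le_sum_of_inS0 (hs : I - κ + 1 ≤ #s) (hr : inS0 κ u r) :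
    -∑ i ∈ s, u i ≤ ∑ i ∈ s, r i := by
  have := hr.2 s hs
  rw [sum_add_distrib] at this
  linarith

lemma isPreemption_of_inS0 (hs : I - κ + 1 ≤ #s) (hr : inS0 κ u r)
    (hT : totT r = -∑ i ∈ s, u i) : IsPreemption s u r (-∑ i ∈ s, u i) := by
  have hsum : ∑ i ∈ s, r i = -∑ i ∈ s, u i :=
    le_antisymm (hT ▸ sum_le_totT hr.1 s) (neg_sum_le_sum_of_inS0 hs hr)
  obtain ⟨hpos, hneg⟩ := (totT_eq_sum_iff hr.1 s).1 (hT.trans hsum.symm)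
  have hv : ∑ i ∈ s, (u i + r i) = 0 := by rw [sum_add_distrib, hsum, add_neg_cancel]
  refine ⟨hpos, fun j hj => ⟨?_, hneg j hj⟩, fun i j hi hj => ?_, hsum, ?_⟩
  · have := hr.2 (insert j s) (by rw [card_insert_of_notMem hj]; omega)
    rw [sum_insert hj, hv] at this
    linarith
  · have hj' : j ∉ s.erase i := fun h => hj (mem_of_mem_erase h)
    have := hr.2 (insert j (s.erase i)) (by
      rw [card_insert_of_notMem hj', card_erase_of_mem hi]
      have := card_pos.2 ⟨i, hi⟩
      omega)
    rw [sum_insert hj', sum_erase_eq_sub hi, hv] at this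
    linarith
  · linarith [sum_add_sum_compl s r, hr.1]

lemma isPreemption_iff (hs : #s = I - κ + 1) :
    IsPreemption s u r (-∑ i ∈ s, u i) ↔ inS0 κ u r ∧ totT r = -∑ i ∈ s, u i :=
  ⟨fun h => ⟨h.inS0 hs.le, h.totT_eq⟩, fun ⟨hr, hT⟩ => isPreemption_of_inS0 hs.ge hr hT⟩

lemma neg_sum_le_totT (hs : I - κ + 1 ≤ #s) (hr : inS0 κ u r) : -∑ i ∈ s, u i ≤ totT r :=
  (neg_sum_le_sum_of_inS0 hs hr).trans (sum_le_totT hr.1 s)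

end Preemption

lemma inE_iff_of_totT_eq {I κ : ℕ} {u : Fin I → ℝ} {b : ℝ}
    (hlow : ∀ r, inS0 κ u r → b ≤ totT r) {r₀ : Fin I → ℝ} (hr₀ : inS0 κ u r₀)
    (hb : totT r₀ = b) (r : Fin I → ℝ) : inE κ u r ↔ inS0 κ u r ∧ totT r = b :=
  ⟨fun ⟨hr, hmin⟩ => ⟨hr, le_antisymm (hb ▸ hmin r₀ hr₀) (hlow r hr)⟩,
    fun ⟨hr, hT⟩ => ⟨hr, fun r' hr' => hT ▸ hlow r' hr'⟩⟩

/-- first-order preemption. With `|C^R| ≥ κ`, `κ ≥ 2`, and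
`0 < G^S ≤ ΔU_{ĸ̂}`, equilibria are exactly the profiles where the coalition
`{j > ĸ̂}` promises a total of `G^S` to `{i ≤ ĸ̂}` respecting individual rationality
and the ordering of ex post intensities; all have total transfer `G^S`. -/
theorem equilibrium_first_order_preemption {I : ℕ} (κ : ℕ) (hκ : 2 ≤ κ) (hκI : κ ≤ I)
    (u : Fin I → ℝ) (hmono : Monotone u)
    (hsupp : κ ≤ (univ.filter (fun i : Fin I => 0 ≤ u i)).card)
    (GS : ℝ) (hGS : GS = -∑ i ∈ univ.filter (fun i : Fin I => (i : ℕ) < I - κ + 1), u i)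
    (hGSpos : 0 < GS)
    (hGSle : GS ≤ ∑ j ∈ univ.filter (fun j : Fin I => I - κ + 1 ≤ (j : ℕ)),
        (u j - u ⟨I - κ, by omega⟩)) :
    ∀ r : Fin I → ℝ,
      (inE κ u r ↔
        ((∀ i : Fin I, (i : ℕ) < I - κ + 1 → 0 ≤ r i) ∧
         (∀ j : Fin I, I - κ + 1 ≤ (j : ℕ) → -u j ≤ r j ∧ r j ≤ 0) ∧
         (∀ i j : Fin I, (i : ℕ) < I - κ + 1 → I - κ + 1 ≤ (j : ℕ) →
            u i + r i ≤ u j + r j) ∧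
         (∑ i ∈ univ.filter (fun i : Fin I => (i : ℕ) < I - κ + 1), r i = GS) ∧
         (∑ j ∈ univ.filter (fun j : Fin I => I - κ + 1 ≤ (j : ℕ)), r j = -GS))) ∧
      (inE κ u r → totT r = GS) := by
  set L : Finset (Fin I) := univ.filter fun i : Fin I => (i : ℕ) < I - κ + 1
  have hL : #L = I - κ + 1 := by simp only [L, Fin.card_filter_val_lt]; omega
  have hcompl : univ.filter (fun j : Fin I => I - κ + 1 ≤ (j : ℕ)) = Lᶜ := by
    ext; simp [L]
  set m := u ⟨I - κ, by omega⟩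
  have hlow : ∀ i ∈ L, u i ≤ m := fun i hi => hmono <| show (i : ℕ) ≤ I - κ by
    simp only [L, mem_filter] at hi; omega
  have hhigh : ∀ j ∉ L, m ≤ u j := fun j hj => hmono <| show I - κ ≤ (j : ℕ) by
    simp only [L, mem_filter, mem_univ, true_and, not_lt] at hj; omega
  have hm : 0 ≤ m := nonneg_of_le_card_filter_nonneg hmono _ (by
    rwa [Fin.val_mk, Nat.sub_sub_self hκI])
  have hGlow : GS ≤ ∑ i ∈ L, (m - u i) := by
    rw [sum_sub_distrib, sum_const, hL, nsmul_eq_mul, hGS]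
    linarith [mul_nonneg (Nat.cast_nonneg (I - κ + 1) : (0 : ℝ) ≤ _) hm]
  rw [hcompl] at hGSle ⊢
  subst hGS
  obtain ⟨r₀, hr₀⟩ := exists_isPreemption hm hGSpos.le hlow hhigh hGlow hGSle
  have hE : ∀ r, inE κ u r ↔ IsPreemption L u r (-∑ i ∈ L, u i) := fun r =>
    (inE_iff_of_totT_eq (fun _ => neg_sum_le_totT hL.ge) ((isPreemption_iff hL).1 hr₀).1
      hr₀.totT_eq r).trans (isPreemption_iff hL).symm
  intro r
  refine ⟨?_, fun h => ((hE r).1 h).totT_eq⟩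
  rw [hE r, IsPreemption]
  simp only [L, mem_filter, mem_univ, true_and, not_lt]
end

section
/- Assume |{i : u_i ≥ 0}| ≥ κ, κ ≥ 2, and G^S > ΔU_{ĸ̂}. Then u* := (∑_{j∈I} u_j)/(κ−1) satisfies 0 < u* < u_{ĸ̂}, there is a unique k* with n < k* ≤ ĸ̂ and u_{k*−1} ≤ u* < u_{k*}, and T* := ∑_{j≥k*}(u_j − u*) > G^S. -/
open Finset

/-!
Indices are `0`-based, so `u ⟨I - κ, _⟩` is the paper's `u_ĸ̂`. Since `∑ u = (κ - 1) u*`, the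
shortfall `G^S` equals `∑_{j > ĸ̂} (u_j - u*)`, hence `G^S - ΔU_ĸ̂ = (κ - 1)(u_ĸ̂ - u*)` and the
hypothesis `G^S > ΔU_ĸ̂` says exactly `u* < u_ĸ̂`. The critical member `k*` is the first index at
which `u` exceeds `u*`: it is at most `ĸ̂`, it lies beyond every negative `u_i` because `u* > 0`,
and `T*` exceeds `G^S` by the positive terms `u_j - u*` with `k* ≤ j ≤ ĸ̂`.
-/

section Crossing

variable {ι α : Type*} [LinearOrder ι] [LinearOrder α] {u : ι → α} {t : α} {k m : ι}

def IsCrossing (u : ι → α) (t : α) (k : ι) : Prop :=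
  (∀ i, i < k → u i ≤ t) ∧ t < u k

theorem IsCrossing.le_of_lt (hk : IsCrossing u t k) (hm : t < u m) : k ≤ m :=
  not_lt.1 fun hmk => (hk.1 m hmk).not_gt hm

theorem IsCrossing.eq (hk : IsCrossing u t k) (hm : IsCrossing u t m) : k = m :=
  le_antisymm (hk.le_of_lt hm.2) (hm.le_of_lt hk.2)

theorem exists_isCrossing [WellFoundedLT ι] (h : ∃ m, t < u m) : ∃ k, IsCrossing u t k := by
  obtain ⟨k, hk, hmin⟩ := wellFounded_lt.has_min {i | t < u i} h
  exact ⟨k, fun i hi => not_lt.1 fun hti => hmin i hti hi, hk⟩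

end Crossing

section FinSums

variable {I : ℕ}

theorem card_filter_lt_le_of_monotone {α : Type*} [Preorder α] [DecidableLT α] {u : Fin I → α}
    (hu : Monotone u) {c : α} {k : Fin I} (hk : c ≤ u k) : #{i | u i < c} ≤ k :=
  calc #{i | u i < c} ≤ #(Iio k) := card_le_card fun _ hi => mem_Iio.2 <|
        lt_of_not_ge fun hki => ((mem_filter.1 hi).2.trans_le (hk.trans (hu hki))).false
    _ = k := Fin.card_Iio k

theorem card_filter_val_ge {a : ℕ} (ha : a ≤ I) : #{j : Fin I | a ≤ (j : ℕ)} = I - a := by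
  have := card_filter_add_card_filter_not (s := univ) (fun j : Fin I => (j : ℕ) < a)
  simp only [not_lt, card_univ, Fintype.card_fin, Fin.card_filter_val_lt] at this
  omega

theorem sum_filter_val_lt_add_sum_filter_val_ge {M : Type*} [AddCommMonoid M] (f : Fin I → M)
    (a : ℕ) : ∑ i ∈ {i : Fin I | (i : ℕ) < a}, f i + ∑ i ∈ {i : Fin I | a ≤ (i : ℕ)}, f i
      = ∑ i, f i := by
  simpa only [not_lt] using sum_filter_add_sum_filter_not univ (fun i : Fin I => (i : ℕ) < a) f

theorem sum_filter_ge_eq_add {M : Type*} [AddCommMonoid M] (f : Fin I → M) {k : Fin I} {a : ℕ}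
    (hka : (k : ℕ) ≤ a) : ∑ j ∈ {j | k ≤ j}, f j
      = ∑ j ∈ {j | k ≤ j ∧ (j : ℕ) < a}, f j + ∑ j ∈ {j : Fin I | a ≤ (j : ℕ)}, f j := by
  rw [← sum_filter_add_sum_filter_not _ (fun j : Fin I => (j : ℕ) < a), filter_filter,
    filter_filter]
  congr 2
  ext j
  simp only [mem_filter, mem_univ, true_and, not_lt, Fin.le_def]
  omega

theorem sum_filter_val_ge_sub_lt {u : Fin I → ℝ} (hu : Monotone u) {t : ℝ} {k : Fin I} {a : ℕ}
    (hk : t < u k) (hka : (k : ℕ) < a) :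
    ∑ j ∈ {j : Fin I | a ≤ (j : ℕ)}, (u j - t) < ∑ j ∈ {j | k ≤ j}, (u j - t) := by
  have hmid : 0 < ∑ j ∈ {j | k ≤ j ∧ (j : ℕ) < a}, (u j - t) :=
    sum_pos (fun j hj => sub_pos.2 (hk.trans_le (hu (mem_filter.1 hj).2.1)))
      ⟨k, by simpa using hka⟩
  rw [sum_filter_ge_eq_add _ hka.le]
  linarith

theorem neg_sum_head_sub_sum_tail_sub {κ : ℕ} (hκ : 1 ≤ κ) (hκI : κ ≤ I) (u : Fin I → ℝ)
    (c : ℝ) : -∑ i ∈ {i : Fin I | (i : ℕ) < I - κ + 1}, u i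
      - ∑ j ∈ {j : Fin I | I - κ + 1 ≤ (j : ℕ)}, (u j - c) = (κ - 1) * c - ∑ i, u i := by
  have hcard : (#{j : Fin I | I - κ + 1 ≤ (j : ℕ)} : ℝ) = κ - 1 := by
    rw [card_filter_val_ge (by omega), show I - (I - κ + 1) = κ - 1 by omega,
      Nat.cast_sub (by omega), Nat.cast_one]
  rw [← sum_filter_val_lt_add_sum_filter_val_ge u (I - κ + 1), sum_sub_distrib, sum_const,
    nsmul_eq_mul, hcard]
  ring

end FinSums

/-- with `|C^R| ≥ κ`, `κ ≥ 2`, `G^S > ΔU_{ĸ̂}`: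
`u* = (∑_j u_j)/(κ-1)` satisfies `0 < u* < u_{ĸ̂}`, there is a unique `k*` with
`n < k* ≤ ĸ̂` and `u_{k*-1} ≤ u* < u_{k*}`, and `T* = ∑_{j ≥ k*}(u_j - u*) > G^S`. -/
theorem critical_member_exists {I : ℕ} (κ : ℕ) (hκ : 2 ≤ κ) (hκI : κ ≤ I)
    (u : Fin I → ℝ) (hmono : Monotone u) (hu : 0 < ∑ i, u i)
    (n : ℕ) (hn : n = (univ.filter (fun i : Fin I => u i < 0)).card)
    (GS ustar : ℝ)
    (hGS : GS = -∑ i ∈ univ.filter (fun i : Fin I => (i : ℕ) < I - κ + 1), u i)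
    (hustar : ustar = (∑ j, u j) / ((κ : ℝ) - 1))
    (hGSgt : ∑ j ∈ univ.filter (fun j : Fin I => I - κ + 1 ≤ (j : ℕ)),
        (u j - u ⟨I - κ, by omega⟩) < GS) :
    (0 < ustar ∧ ustar < u ⟨I - κ, by omega⟩) ∧
    (∃! k : Fin I, n ≤ (k : ℕ) ∧ (k : ℕ) < I - κ + 1 ∧
        (∀ i : Fin I, i < k → u i ≤ ustar) ∧ ustar < u k) ∧
    (∀ k : Fin I, n ≤ (k : ℕ) → (k : ℕ) < I - κ + 1 →
        (∀ i : Fin I, i < k → u i ≤ ustar) → ustar < u k →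
        GS < ∑ j ∈ univ.filter (fun j : Fin I => k ≤ j), (u j - ustar)) := by
  have hκ1 : (0 : ℝ) < κ - 1 := by
    have : (2 : ℝ) ≤ κ := by exact_mod_cast hκ
    linarith
  have hsum : ∑ i, u i = (κ - 1) * ustar := by
    rw [hustar]
    field_simp
  have hgap (c : ℝ) : GS - ∑ j ∈ univ.filter (fun j : Fin I => I - κ + 1 ≤ (j : ℕ)), (u j - c)
      = (κ - 1) * (c - ustar) := by
    rw [hGS, neg_sum_head_sub_sum_tail_sub (by omega) hκI, hsum]
    ring
  have hpos : 0 < ustar := hustar ▸ div_pos hu hκ1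
  have hlt : ustar < u ⟨I - κ, by omega⟩ :=
    sub_pos.1 <| pos_of_mul_pos_right (by linarith [hgap (u ⟨I - κ, by omega⟩)]) hκ1.le
  have hGS_tail := hgap ustar
  rw [sub_self, mul_zero, sub_eq_zero] at hGS_tail
  have hn_le (k : Fin I) (hk : ustar < u k) : n ≤ k :=
    hn ▸ card_filter_lt_le_of_monotone hmono (hpos.le.trans hk.le)
  obtain ⟨k, hk⟩ := exists_isCrossing ⟨_, hlt⟩
  have hka : (k : ℕ) < I - κ + 1 := by
    have : (k : ℕ) ≤ I - κ := hk.le_of_lt hlt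
    omega
  refine ⟨⟨hpos, hlt⟩, ⟨k, ⟨hn_le k hk.2, hka, hk⟩, fun m hm => (hk.eq hm.2.2).symm⟩, ?_⟩
  intro k _ hka _ hk
  rw [hGS_tail]
  exact sum_filter_val_ge_sub_lt hmono hk hka
end
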